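/- arXiv:math/0406382 — 7 statements merged into one kernel-verified Lean document; each statement's English description precedes it below -/
import Mathlib

section
/- If a group H has the property UP₄ (for any four nonempty finite subsets A, B, C, D of H, the product set ABCD contains at least one element uniquely decomposable as a product abcd with a ∈ A, b ∈ B, c ∈ C, d ∈ D), then H has the strong unique product property (for any nonempty finite subsets X, Y of H with |Y| ≥ 2, the product set XY contains two uniquely decomposable elements x₁y₁ and x₂y₂ with x₁, x₂ ∈ X, y₁, y₂ ∈ Y and y₁ ≠ y₂). -/
/-- If a group `H` has property UP₄ (every product of four nonempty finite subsets
contains a uniquely decomposable element), then `H` has the strong unique product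
property. -/
theorem up4_implies_strong_up {H : Type*} [Group H]
    (hUP4 : ∀ A B C D : Finset H, A.Nonempty → B.Nonempty → C.Nonempty → D.Nonempty →
      ∃ u : H, ∃! q : H × H × H × H,
        q.1 ∈ A ∧ q.2.1 ∈ B ∧ q.2.2.1 ∈ C ∧ q.2.2.2 ∈ D ∧
          q.1 * q.2.1 * q.2.2.1 * q.2.2.2 = u) :
    ∀ X Y : Finset H, X.Nonempty → Y.Nonempty → 2 ≤ Y.card →
      ∃ x₁ ∈ X, ∃ y₁ ∈ Y, ∃ x₂ ∈ X, ∃ y₂ ∈ Y,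
        y₁ ≠ y₂ ∧ UniqueMul X Y x₁ y₁ ∧ UniqueMul X Y x₂ y₂ := by
  intro X Y hX hY hYcard
  classical
  obtain ⟨u, ⟨x₁, y₁, c, d⟩, ⟨hq1, hq2, hq3, hq4, hqu⟩, huniq⟩ :=
    hUP4 X Y (Y.image (·⁻¹)) (X.image (·⁻¹)) hX hY (hY.image _) (hX.image _)
  simp only at hq1 hq2 hq3 hq4 hqu
  obtain ⟨y₂, hy₂, rfl⟩ := Finset.mem_image.mp hq3
  obtain ⟨x₂, hx₂, rfl⟩ := Finset.mem_image.mp hq4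
  refine ⟨x₁, hq1, y₁, hq2, x₂, hx₂, y₂, hy₂, ?_, ?_, ?_⟩
  · -- y₁ ≠ y₂
    rintro rfl
    obtain ⟨y, hy, hne⟩ := Finset.exists_mem_ne hYcard y₁
    have h := huniq (x₁, y, y⁻¹, x₂⁻¹)
      ⟨hq1, hy, Finset.mem_image_of_mem _ hy, Finset.mem_image_of_mem _ hx₂, by
        simp only
        rw [← hqu]
        group⟩
    simp only [Prod.mk.injEq] at h
    exact hne h.2.1
  · -- UniqueMul X Y x₁ y₁
    intro a b ha hb hab
    have h := huniq (a, b, y₂⁻¹, x₂⁻¹)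
      ⟨ha, hb, hq3, Finset.mem_image_of_mem _ hx₂, by
        simp only
        rw [← hqu, hab]⟩
    simp only [Prod.mk.injEq] at h
    exact ⟨h.1, h.2.1⟩
  · -- UniqueMul X Y x₂ y₂
    intro a b ha hb hab
    have h := huniq (x₁, y₁, b⁻¹, a⁻¹)
      ⟨hq1, hq2, Finset.mem_image_of_mem _ hb, Finset.mem_image_of_mem _ ha, by
        simp only
        rw [← hqu]
        have : y₂⁻¹ * x₂⁻¹ = b⁻¹ * a⁻¹ := by
          rw [← mul_inv_rev, ← mul_inv_rev, hab]
        simp only [mul_assoc, this]⟩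
    simp only [Prod.mk.injEq] at h
    have hb' : b = y₂ := inv_injective h.2.2.1
    have ha' : a = x₂ := inv_injective h.2.2.2
    exact ⟨ha', hb'⟩
end

section
/- Let A be a nontrivial subgroup of a group B and let b ∈ B. If the subgroup of B generated by all conjugates A^{b^i} for i ∈ ℤ is naturally isomorphic to the free product of the groups A^{b^i} (i ∈ ℤ), then b is transcendental over A, i.e., the subgroup ⟨A, b⟩ of B is naturally isomorphic to the free product A * ⟨b⟩ with ⟨b⟩ infinite cyclic. -/
namespace TransAux

variable {B : Type*} [Group B] (A : Subgroup B)

abbrev F := Monoid.CoprodI (fun _ : ℤ => (A : Type _))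

/-- The shift homomorphism `of i a ↦ of (i - n) a`. -/
def sh (n : ℤ) : F A →* F A :=
  Monoid.CoprodI.lift fun i =>
    (Monoid.CoprodI.of (M := fun _ : ℤ => (A : Type _)) (i := i - n))

lemma sh_of (n i : ℤ) (a : A) :
    sh A n (Monoid.CoprodI.of (i := i) a) = Monoid.CoprodI.of (i := i - n) a :=
  Monoid.CoprodI.lift_of _ _

lemma sh_comp (m n : ℤ) : (sh A m).comp (sh A n) = sh A (n + m) := by
  apply Monoid.CoprodI.ext_hom
  intro i
  ext a
  simp only [MonoidHom.comp_apply, Monoid.CoprodI.lift_comp_of, sh_of, sub_sub]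

lemma sh_sh (m n : ℤ) (x : F A) : sh A m (sh A n x) = sh A (n + m) x := by
  rw [← MonoidHom.comp_apply, sh_comp]

lemma sh_zero : sh A 0 = MonoidHom.id _ := by
  apply Monoid.CoprodI.ext_hom
  intro i
  ext a
  simp [sh_of]

/-- The shift as a `MulEquiv`. -/
def shE (n : ℤ) : F A ≃* F A :=
  MonoidHom.toMulEquiv (sh A n) (sh A (-n))
    (by rw [sh_comp, add_neg_cancel, sh_zero])
    (by rw [sh_comp, neg_add_cancel, sh_zero])

@[simp] lemma shE_apply (n : ℤ) (x : F A) : shE A n x = sh A n x := rfl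

/-- The shift action of `ℤ` on the free product of the copies of `A`. -/
def φ : Multiplicative ℤ →* MulAut (F A) :=
  MonoidHom.mk' (fun n => shE A n.toAdd) (by
    intro m n
    ext x
    show sh A (m * n).toAdd x = sh A m.toAdd (sh A n.toAdd x)
    rw [sh_sh]
    congr 1
    simp [add_comm])

@[simp] lemma φ_apply (n : Multiplicative ℤ) (x : F A) : φ A n x = sh A n.toAdd x := rfl

end TransAux

open TransAux in
/-- If the subgroup of `B` generated by the conjugates `A^{bⁱ}` (`i ∈ ℤ`) of a
nontrivial subgroup `A` is naturally the free product of these conjugates (i.e. the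
natural map from the free product of the copies of `A`, the `i`-th copy mapping via
`a ↦ b⁻ⁱ a bⁱ`, is injective), then `b` is transcendental over `A`: the natural map
`A * ⟨b⟩∞ → B` is injective. -/
theorem free_product_of_conjugates_implies_transcendental
    {B : Type*} [Group B] (A : Subgroup B) (hA : A ≠ ⊥) (b : B)
    (h : Function.Injective
      (Monoid.CoprodI.lift (fun i : ℤ =>
        ((MulAut.conj (b ^ (-i))).toMonoidHom.comp A.subtype :
          (fun _ : ℤ => A) i →* B)))) :
    Function.Injective (Monoid.Coprod.lift A.subtype (zpowersHom B b)) := by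
  classical
  set f : F A →* B := Monoid.CoprodI.lift (fun i : ℤ =>
      ((MulAut.conj (b ^ (-i))).toMonoidHom.comp A.subtype :
        (fun _ : ℤ => A) i →* B)) with hf
  have f_of : ∀ (i : ℤ) (a : A), f (Monoid.CoprodI.of (i := i) a) = b ^ (-i) * a * (b ^ (-i))⁻¹ := by
    intro i a
    simp only [hf, Monoid.CoprodI.lift_of, MonoidHom.comp_apply, MulEquiv.coe_toMonoidHom,
      MulAut.conj_apply]
    rfl
  -- the map from the semidirect product to B
  have pcompat : ∀ g : Multiplicative ℤ,
      f.comp (φ A g).toMonoidHom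
        = (MulAut.conj (zpowersHom B b g)).toMonoidHom.comp f := by
    intro g
    apply Monoid.CoprodI.ext_hom
    intro i
    ext a
    simp only [MonoidHom.comp_apply, MulEquiv.coe_toMonoidHom, φ_apply, sh_of, f_of,
      MulAut.conj_apply, zpowersHom_apply]
    group
  set p : SemidirectProduct (F A) (Multiplicative ℤ) (φ A) →* B :=
    SemidirectProduct.lift f (zpowersHom B b) pcompat with hp
  -- the map from the coproduct to the semidirect product
  set e : Monoid.Coprod A (Multiplicative ℤ) →* SemidirectProduct (F A) (Multiplicative ℤ) (φ A) :=
    Monoid.Coprod.lift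
      (SemidirectProduct.inl.comp (Monoid.CoprodI.of (M := fun _ : ℤ => (A : Type _)) (i := (0 : ℤ))))
      SemidirectProduct.inr with he
  -- a left inverse of `e`
  set q₁ : F A →* Monoid.Coprod A (Multiplicative ℤ) :=
    Monoid.CoprodI.lift (fun i : ℤ =>
      (MulAut.conj (Monoid.Coprod.inr (Multiplicative.ofAdd (-i)))).toMonoidHom.comp
        Monoid.Coprod.inl) with hq₁
  have q₁_of : ∀ (i : ℤ) (a : A), q₁ (Monoid.CoprodI.of (i := i) a)
      = Monoid.Coprod.inr (Multiplicative.ofAdd (-i)) * Monoid.Coprod.inl a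
        * (Monoid.Coprod.inr (Multiplicative.ofAdd (-i)))⁻¹ := by
    intro i a
    simp [hq₁, Monoid.CoprodI.lift_of]
  have qcompat : ∀ g : Multiplicative ℤ,
      q₁.comp (φ A g).toMonoidHom
        = (MulAut.conj ((Monoid.Coprod.inr :
            Multiplicative ℤ →* Monoid.Coprod A (Multiplicative ℤ)) g)).toMonoidHom.comp q₁ := by
    intro g
    apply Monoid.CoprodI.ext_hom
    intro i
    ext a
    simp only [MonoidHom.comp_apply, MulEquiv.coe_toMonoidHom, φ_apply, sh_of, q₁_of,
      MulAut.conj_apply]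
    have : (Multiplicative.ofAdd (-(i - g.toAdd)))
        = g * Multiplicative.ofAdd (-i) := by
      rw [neg_sub]
      show Multiplicative.ofAdd (g.toAdd - i) = _
      rw [sub_eq_add_neg, ofAdd_add]
      simp
    rw [this, map_mul]
    group
  set q : SemidirectProduct (F A) (Multiplicative ℤ) (φ A) →* Monoid.Coprod A (Multiplicative ℤ) :=
    SemidirectProduct.lift q₁ Monoid.Coprod.inr qcompat with hq
  have qe : q.comp e = MonoidHom.id _ := by
    apply Monoid.Coprod.hom_ext
    · ext a
      simp [he, hq, q₁_of]
    · ext n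
      simp [he, hq]
  have e_inj : Function.Injective e := by
    intro x y hxy
    have := DFunLike.congr_fun qe
    simpa [MonoidHom.comp_apply] using (this x).symm.trans ((congrArg q hxy).trans (this y))
  have p_inj : Function.Injective p := by
    rw [injective_iff_map_eq_one]
    rintro ⟨w, n⟩ hx
    rw [SemidirectProduct.mk_eq_inl_mul_inr, map_mul, hp, SemidirectProduct.lift_inl,
      SemidirectProduct.lift_inr, zpowersHom_apply] at hx
    have hw : f w = b ^ (-n.toAdd) := by
      rw [zpow_neg]
      exact eq_inv_of_mul_eq_one_left hx
    obtain ⟨a, ha⟩ := Subgroup.ne_bot_iff_exists_ne_one.mp hA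
    have ht : n.toAdd = 0 := by
      by_contra ht
      have key : w * Monoid.CoprodI.of (M := fun _ : ℤ => (A : Type _)) (i := (0 : ℤ)) a * w⁻¹
          = Monoid.CoprodI.of (M := fun _ : ℤ => (A : Type _)) (i := n.toAdd) a := by
        apply h
        simp only [map_mul, map_inv, f_of, hw]
        group
      set χ : F A →* A := Monoid.CoprodI.lift (fun i : ℤ =>
        if i = (0 : ℤ) then MonoidHom.id A else 1) with hχ
      have h1 : χ (Monoid.CoprodI.of (M := fun _ : ℤ => (A : Type _)) (i := (0 : ℤ)) a) = a := by
        simp [hχ, Monoid.CoprodI.lift_of]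
      have h2 : χ (Monoid.CoprodI.of (M := fun _ : ℤ => (A : Type _)) (i := n.toAdd) a) = 1 := by
        simp [hχ, Monoid.CoprodI.lift_of, ht]
      have hk := congrArg χ key
      rw [map_mul, map_mul, map_inv, h1, h2] at hk
      refine ha ?_
      have h3 := congrArg (fun x => (χ w)⁻¹ * x * χ w) hk
      simpa [mul_assoc] using h3
    have hn : n = 1 := by
      have := ht
      rw [← ofAdd_toAdd n, ht]
      rfl
    have hw1 : w = 1 := h (by rw [map_one, hw, ht, neg_zero, zpow_zero])
    rw [hw1, hn]
    rfl
  have hfact : Monoid.Coprod.lift A.subtype (zpowersHom B b) = p.comp e := by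
    apply Monoid.Coprod.hom_ext
    · ext a
      simp [he, hp, f_of]
    · ext n
      simp [he, hp]
  rw [hfact, MonoidHom.coe_comp]
  exact p_inj.comp e_inj
end

section
/- Let A be a nontrivial subgroup of a group B and let b ∈ B be transcendental over A. Then the subgroup of B generated by the conjugates A^{b^i}, i ∈ ℤ, is naturally isomorphic to the free product of the groups A^{b^i} over i ∈ ℤ. -/
/-!
Let `N` be the free product of copies `G_k`, `k ∈ K`, of a group `G`. The group `K` acts on `N` by
shifting indices, and the map `G ∗ K → N ⋊ K` that is `g ↦ g ∈ G_1` on `G` and the identity on `K`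
sends `k⁻¹ g k` to `g ∈ G_k`. So the map `N → G ∗ K` sending `G_k` to `k⁻¹ G k` is injective. For
`G = A` and `K = ℤ`, its composite with the injective map `A ∗ ℤ → B` is the map of the theorem.
-/

namespace Monoid

variable {G K : Type*} [Group G] [Group K]

namespace CoprodI

def shiftHom (k : K) : CoprodI (fun _ : K => G) →* CoprodI (fun _ : K => G) :=
  lift fun j => of (M := fun _ : K => G) (i := j * k⁻¹)

@[simp]
theorem shiftHom_of (k j : K) (g : G) :
    shiftHom k (of (M := fun _ : K => G) (i := j) g) = of (i := j * k⁻¹) g :=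
  lift_of _ _

theorem shiftHom_one : shiftHom (1 : K) = MonoidHom.id (CoprodI fun _ : K => G) := by
  ext j g
  simp

theorem shiftHom_mul (k l : K) :
    shiftHom (k * l) = (shiftHom k).comp (shiftHom l : CoprodI (fun _ : K => G) →* _) := by
  ext j g
  simp [mul_assoc]

def shift : K →* MulAut (CoprodI fun _ : K => G) where
  toFun k := MonoidHom.toMulEquiv (shiftHom k) (shiftHom k⁻¹)
    (by rw [← shiftHom_mul, inv_mul_cancel, shiftHom_one])
    (by rw [← shiftHom_mul, mul_inv_cancel, shiftHom_one])
  map_one' := MulEquiv.ext fun x => by simp [shiftHom_one]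
  map_mul' k l := MulEquiv.ext fun x => by simp [shiftHom_mul]

theorem shift_apply (k : K) (x : CoprodI fun _ : K => G) : shift k x = shiftHom k x :=
  rfl

end CoprodI

namespace Coprod

open CoprodI

def ofConjugates : CoprodI (fun _ : K => G) →* G ∗ K :=
  CoprodI.lift fun k => (MulAut.conj (inr k⁻¹)).toMonoidHom.comp inl

theorem ofConjugates_of (k : K) (g : G) :
    ofConjugates (CoprodI.of (M := fun _ : K => G) (i := k) g) = inr k⁻¹ * inl g * inr k := by
  rw [ofConjugates, CoprodI.lift_of, MonoidHom.comp_apply, MulEquiv.coe_toMonoidHom,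
    MulAut.conj_apply, map_inv, inv_inv]

def toSemidirectProduct : G ∗ K →* CoprodI (fun _ : K => G) ⋊[shift] K :=
  lift (SemidirectProduct.inl.comp (CoprodI.of (M := fun _ : K => G) (i := 1)))
    SemidirectProduct.inr

theorem toSemidirectProduct_comp_ofConjugates :
    toSemidirectProduct.comp ofConjugates =
      (SemidirectProduct.inl : CoprodI (fun _ : K => G) →* _ ⋊[shift] K) := by
  refine CoprodI.ext_hom _ _ fun k => MonoidHom.ext fun g => ?_
  simp only [MonoidHom.comp_apply, ofConjugates_of, map_mul, toSemidirectProduct, lift_apply_inl,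
    lift_apply_inr]
  rw [← SemidirectProduct.inl_aut_inv, ← map_inv, shift_apply, shiftHom_of, inv_inv, one_mul]

theorem ofConjugates_injective :
    Function.Injective (ofConjugates : CoprodI (fun _ : K => G) →* G ∗ K) := by
  refine Function.Injective.of_comp (f := toSemidirectProduct) ?_
  rw [← MonoidHom.coe_comp, toSemidirectProduct_comp_ofConjugates]
  exact SemidirectProduct.inl_injective

end Coprod

end Monoid

theorem transcendental_implies_free_product_of_conjugates_general
    {B : Type*} [Group B] (A : Subgroup B) (b : B)
    (h : Function.Injective (Monoid.Coprod.lift A.subtype (zpowersHom B b))) :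
    Function.Injective
      (Monoid.CoprodI.lift (fun i : ℤ =>
        ((MulAut.conj (b ^ (-i))).toMonoidHom.comp A.subtype :
          (fun _ : ℤ => A) i →* B))) := by
  -- `Multiplicative ℤ` is `ℤ` by definition, so the two maps have the same domain.
  have hcomp : Monoid.CoprodI.lift (fun i : ℤ =>
        ((MulAut.conj (b ^ (-i))).toMonoidHom.comp A.subtype : (fun _ : ℤ => A) i →* B)) =
      (Monoid.Coprod.lift A.subtype (zpowersHom B b)).comp
        (Monoid.Coprod.ofConjugates (G := A) (K := Multiplicative ℤ)) := by
    refine Monoid.CoprodI.ext_hom _ _ fun i => MonoidHom.ext fun a => ?_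
    show _ = Monoid.Coprod.lift A.subtype (zpowersHom B b) (Monoid.Coprod.ofConjugates
      (Monoid.CoprodI.of (M := fun _ : Multiplicative ℤ => A) (i := Multiplicative.ofAdd i) a))
    rw [Monoid.Coprod.ofConjugates_of]
    simp only [Monoid.CoprodI.lift_of, MonoidHom.comp_apply, MulEquiv.coe_toMonoidHom,
      MulAut.conj_apply, map_mul, Monoid.Coprod.lift_apply_inl, Monoid.Coprod.lift_apply_inr,
      zpowersHom_apply, toAdd_inv, toAdd_ofAdd, zpow_neg, inv_inv]
  rw [hcomp]
  exact h.comp Monoid.Coprod.ofConjugates_injective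

/-- If `b` is transcendental over a nontrivial subgroup `A` of `B` (i.e. the natural
map `A * ⟨b⟩∞ → B` is injective), then the subgroup generated by the conjugates
`A^{bⁱ}`, `i ∈ ℤ`, is naturally the free product of these conjugates: the natural
map from the free product of copies of `A`, the `i`-th copy mapping via
`a ↦ b⁻ⁱ a bⁱ`, is injective. -/
theorem transcendental_implies_free_product_of_conjugates
    {B : Type*} [Group B] (A : Subgroup B) (hA : A ≠ ⊥) (b : B)
    (h : Function.Injective (Monoid.Coprod.lift A.subtype (zpowersHom B b))) :
    Function.Injective
      (Monoid.CoprodI.lift (fun i : ℤ =>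
        ((MulAut.conj (b ^ (-i))).toMonoidHom.comp A.subtype :
          (fun _ : ℤ => A) i →* B))) :=
  transcendental_implies_free_product_of_conjugates_general A b h
end

section
/- Let A be a nontrivial subgroup of a group B, let b ∈ B, and suppose u is a nontrivial element of the free product A * ⟨b⟩_∞ (with ⟨b⟩_∞ infinite cyclic) that maps to 1 in B under the natural evaluation map. Then for any a ∈ A \ {1}, the element [a, u] = a⁻¹u⁻¹au of the free product also maps to 1 in B, and if u does not lie in the free factor A, then [a,u] gives a nontrivial relation among the subgroups A^{b^i}. -/
/-!
Let `s` be the generator of the infinite cyclic factor of `G ∗ ℤ`. Sending the `i`-th copy of `G`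
to `s⁻ⁱ G sⁱ` maps the free product `∗ᵢ G` of ℤ copies of `G` onto the kernel of `G ∗ ℤ → ℤ`:
`G ∗ ℤ` retracts onto the semidirect product `(∗ᵢ G) ⋊ ℤ`, with ℤ shifting the copies.

The commutator `[a, u]` lies in that kernel, so if it is nontrivial it comes from a nontrivial
relation among the `A^{bⁱ}`. If it is trivial, then `u` centralizes `a ≠ 1`; in the semidirect
product, conjugating by an element with ℤ-component `n ≠ 0` moves the copy of `a` in factor `0`
into factor `-n`, so `u` has ℤ-component `0` and is itself the nontrivial relation.
-/

open Monoid

namespace Monoid.CoprodI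

theorem eq_one_of_of_mul_eq_mul_of {ι : Type*} {M : ι → Type*} [∀ i, Group (M i)] {i j : ι}
    (hij : i ≠ j) {a : M i} {c : M j} {k : CoprodI M} (h : of a * k = k * of c) : c = 1 := by
  classical
  have h := congrArg (lift (Pi.mulSingle j (MonoidHom.id (M j)))) h
  simp only [map_mul, of_leftInverse j c, lift_of, Pi.mulSingle_eq_of_ne hij,
    MonoidHom.one_apply, one_mul] at h
  exact left_eq_mul.mp h

variable {ι H G : Type*} [Group H] [MulAction H ι] [Group G]

def reindexAut : H →* MulAut (CoprodI fun _ : ι => G) where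
  toFun h := MonoidHom.toMulEquiv
    (lift fun i => of (M := fun _ : ι => G) (i := h • i))
    (lift fun i => of (M := fun _ : ι => G) (i := h⁻¹ • i))
    (ext_hom _ _ fun i => by ext; simp) (ext_hom _ _ fun i => by ext; simp)
  map_one' := MulEquiv.toMonoidHom_injective <| ext_hom _ _ fun i => by ext; simp
  map_mul' g h := MulEquiv.toMonoidHom_injective <| ext_hom _ _ fun i => by ext; simp [mul_smul]

@[simp]
theorem reindexAut_of (h : H) (i : ι) (a : G) :
    reindexAut h (of (i := i) a) = of (i := h • i) a :=
  lift_of _ _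

end Monoid.CoprodI

open Monoid.CoprodI (of)

section Conjugates

variable {G B C : Type*} [Group G] [Group B] [Group C]

def conjugatesLift (f : G →* B) (b : B) : CoprodI (fun _ : ℤ => G) →* B :=
  CoprodI.lift fun i => (MulAut.conj (b ^ (-i))).toMonoidHom.comp f

@[simp]
theorem conjugatesLift_of (f : G →* B) (b : B) (i : ℤ) (a : G) :
    conjugatesLift f b (of (i := i) a) = b ^ (-i) * f a * (b ^ (-i))⁻¹ :=
  CoprodI.lift_of _ _

theorem map_conjugatesLift (φ : B →* C) (f : G →* B) (b : B) (k : CoprodI fun _ : ℤ => G) :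
    φ (conjugatesLift f b k) = conjugatesLift (φ.comp f) (φ b) k := by
  rw [← MonoidHom.comp_apply]
  congr 1
  exact CoprodI.ext_hom _ _ fun i => by ext; simp

variable (G) in
/-- Conjugation by `sⁿ` moves `s⁻ⁱ G sⁱ` to `s^{-(i-n)} G s^{i-n}`, hence the inverse. -/
def shiftAction : Multiplicative ℤ →* MulAut (CoprodI fun _ : ℤ => G) :=
  CoprodI.reindexAut.comp invMonoidHom

@[simp]
theorem shiftAction_of (z : Multiplicative ℤ) (i : ℤ) (a : G) :
    shiftAction G z (of (i := i) a) = of (i := -Multiplicative.toAdd z + i) a :=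
  CoprodI.reindexAut_of (G := G) z⁻¹ i a

theorem conjugatesLift_comp_shiftAction (f : G →* B) (b : B) (z : Multiplicative ℤ) :
    (conjugatesLift f b).comp (shiftAction G z).toMonoidHom =
      (MulAut.conj (zpowersHom B b z)).toMonoidHom.comp (conjugatesLift f b) := by
  refine CoprodI.ext_hom _ _ fun i => ?_
  ext a
  simp only [MonoidHom.comp_apply, MulEquiv.coe_toMonoidHom, shiftAction_of, conjugatesLift_of,
    MulAut.conj_apply, zpowersHom_apply, neg_add_rev, neg_neg]
  group

end Conjugates

namespace Monoid.Coprod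

variable {G : Type*} [Group G]

variable (G) in
abbrev ShiftSemidirect := CoprodI (fun _ : ℤ => G) ⋊[shiftAction G] Multiplicative ℤ

theorem inr_eq_zpowersHom :
    (inr : Multiplicative ℤ →* G ∗ Multiplicative ℤ) = zpowersHom _ (inr (.ofAdd 1)) := by
  ext; simp

def toShiftSemidirect : G ∗ Multiplicative ℤ →* ShiftSemidirect G :=
  lift (SemidirectProduct.inl.comp (of (M := fun _ : ℤ => G) (i := 0))) SemidirectProduct.inr

@[simp]
theorem toShiftSemidirect_inl (a : G) :
    toShiftSemidirect (inl a) = SemidirectProduct.inl (of (i := 0) a) :=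
  lift_apply_inl _ _ _

@[simp]
theorem toShiftSemidirect_inr (z : Multiplicative ℤ) :
    toShiftSemidirect (inr z : G ∗ Multiplicative ℤ) = SemidirectProduct.inr z :=
  lift_apply_inr _ _ _

def ofShiftSemidirect : ShiftSemidirect G →* G ∗ Multiplicative ℤ :=
  SemidirectProduct.lift (conjugatesLift inl (inr (.ofAdd 1))) inr fun z => by
    rw [conjugatesLift_comp_shiftAction, ← inr_eq_zpowersHom]

theorem ofShiftSemidirect_toShiftSemidirect (x : G ∗ Multiplicative ℤ) :
    ofShiftSemidirect (toShiftSemidirect x) = x := by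
  suffices ofShiftSemidirect.comp toShiftSemidirect = MonoidHom.id (G ∗ Multiplicative ℤ) from
    DFunLike.congr_fun this x
  refine hom_ext ?_ ?_ <;> ext <;> simp [ofShiftSemidirect]

theorem right_toShiftSemidirect (x : G ∗ Multiplicative ℤ) :
    (toShiftSemidirect x).right = snd x := by
  suffices SemidirectProduct.rightHom.comp toShiftSemidirect = snd (M := G) from
    DFunLike.congr_fun this x
  refine hom_ext ?_ ?_ <;> ext <;> simp

theorem exists_conjugatesLift_eq_of_snd_eq_one {x : G ∗ Multiplicative ℤ} (hx : snd x = 1) :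
    ∃ k, conjugatesLift inl (inr (.ofAdd 1)) k = x := by
  refine ⟨(toShiftSemidirect x).left, ?_⟩
  conv_rhs => rw [← ofShiftSemidirect_toShiftSemidirect x,
    ← SemidirectProduct.inl_left_mul_inr_right (toShiftSemidirect x), right_toShiftSemidirect, hx]
  simp [ofShiftSemidirect]

theorem snd_eq_one_of_commute_inl {a : G} (ha : a ≠ 1) {x : G ∗ Multiplicative ℤ}
    (hx : Commute (inl a) x) : snd x = 1 := by
  by_contra hn
  rw [← right_toShiftSemidirect] at hn
  have h := congrArg SemidirectProduct.left (congrArg toShiftSemidirect hx.eq)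
  simp only [map_mul, toShiftSemidirect_inl, SemidirectProduct.mul_left,
    SemidirectProduct.left_inl, SemidirectProduct.right_inl, map_one, MulAut.one_apply,
    shiftAction_of, add_zero] at h
  refine ha (CoprodI.eq_one_of_of_mul_eq_mul_of ?_ h)
  rwa [ne_eq, zero_eq_neg, toAdd_eq_zero]

end Monoid.Coprod

theorem commutator_relation_among_conjugates_general
    {B : Type*} [Group B] (A : Subgroup B) (b : B)
    (u : Monoid.Coprod A (Multiplicative ℤ)) (hu : u ≠ 1)
    (hker : Monoid.Coprod.lift A.subtype (zpowersHom B b) u = 1) :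
    ∀ a : A, a ≠ 1 →
      (Monoid.Coprod.lift A.subtype (zpowersHom B b)
          ((Monoid.Coprod.inl a)⁻¹ * u⁻¹ * Monoid.Coprod.inl a * u) = 1) ∧
      ((¬ ∃ a' : A, u = Monoid.Coprod.inl a') →
        ∃ w : Monoid.CoprodI (fun _ : ℤ => A), w ≠ 1 ∧
          Monoid.CoprodI.lift (fun i : ℤ =>
            ((MulAut.conj (b ^ (-i))).toMonoidHom.comp A.subtype :
              (fun _ : ℤ => A) i →* B)) w = 1) := by
  intro a ha
  have hcomm : Coprod.lift A.subtype (zpowersHom B b)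
      ((Coprod.inl a)⁻¹ * u⁻¹ * Coprod.inl a * u) = 1 := by
    simp [hker]
  refine ⟨hcomm, fun _ => ?_⟩
  obtain ⟨x, hx, hx_snd, hx_rel⟩ : ∃ x : Coprod A (Multiplicative ℤ),
      x ≠ 1 ∧ Coprod.snd x = 1 ∧ Coprod.lift A.subtype (zpowersHom B b) x = 1 := by
    by_cases hau : Commute (Coprod.inl a) u
    · exact ⟨u, hu, Coprod.snd_eq_one_of_commute_inl ha hau, hker⟩
    · refine ⟨_, fun h => hau ?_, by simp, hcomm⟩
      rw [← Commute.inv_inv_iff, ← commutatorElement_eq_one_iff_commute, commutatorElement_def,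
        inv_inv, inv_inv, h]
  obtain ⟨w, rfl⟩ := Coprod.exists_conjugatesLift_eq_of_snd_eq_one hx_snd
  refine ⟨w, by rintro rfl; simp at hx, ?_⟩
  rwa [map_conjugatesLift, Coprod.lift_comp_inl, Coprod.lift_apply_inr, zpowersHom_apply,
    toAdd_ofAdd, zpow_one] at hx_rel

/-- Let `A` be a nontrivial subgroup of `B`, `b ∈ B`, and let `u` be a nontrivial
element of the free product `A * ⟨b⟩∞` that maps to `1` in `B` under the natural
evaluation map. Then for every `a ∈ A \ {1}` the commutator `[a, u] = a⁻¹u⁻¹au`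
also maps to `1` in `B`, and if `u` does not lie in the free factor `A`, then there
is a nontrivial relation among the subgroups `A^{bⁱ}`: the natural map from the free
product of the copies `A^{bⁱ}` to `B` has a nontrivial kernel. -/
theorem commutator_relation_among_conjugates
    {B : Type*} [Group B] (A : Subgroup B) (hA : A ≠ ⊥) (b : B)
    (u : Monoid.Coprod A (Multiplicative ℤ)) (hu : u ≠ 1)
    (hker : Monoid.Coprod.lift A.subtype (zpowersHom B b) u = 1) :
    ∀ a : A, a ≠ 1 →
      (Monoid.Coprod.lift A.subtype (zpowersHom B b)
          ((Monoid.Coprod.inl a)⁻¹ * u⁻¹ * Monoid.Coprod.inl a * u) = 1) ∧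
      ((¬ ∃ a' : A, u = Monoid.Coprod.inl a') →
        ∃ w : Monoid.CoprodI (fun _ : ℤ => A), w ≠ 1 ∧
          Monoid.CoprodI.lift (fun i : ℤ =>
            ((MulAut.conj (b ^ (-i))).toMonoidHom.comp A.subtype :
              (fun _ : ℤ => A) i →* B)) w = 1) :=
  commutator_relation_among_conjugates_general A b u hu hker
end

section
/- If every nontrivial equation over every torsion-free group is solvable over that group (the Levin conjecture), then every nontrivial generalized equation with torsion-free variable group over a torsion-free group is solvable over that group (the generalized Levin conjecture). -/
/-!
Let `w ∈ G ∗ T` be nontrivial. If `w` is conjugate into `T`, sending `T` to `1` solves it.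
Otherwise `w` is conjugate to a cyclically reduced word of length at least two, and so is its
image under `G ∗ T → (G ∗ T) ∗ ⟨t⟩`, `g ↦ g`, `s ↦ t s t⁻¹`. Such a word is not conjugate into the
factor `G ∗ T`, so the image is a nontrivial equation over the torsion-free group `G ∗ T`, and a
solution `t ↦ t̃` of it yields the solution `s ↦ t̃ s t̃⁻¹` of `w`.

The facts about free products come from the normal form theorem, proved by van der Waerden's trick
of letting `A ∗ B` act on reduced words: conjugates of letters have palindromic normal forms, and
the powers of a cyclically reduced word of length at least two are reduced, so `A ∗ B` is
torsion-free when `A` and `B` are.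
-/

universe u v

/-- A generalized equation `w ∈ G * T` is nontrivial if `w` is not conjugate in
`G * T` to an element of `G`. -/
def GenEqNontrivial (G : Type u) (T : Type v) [Group G] [Group T]
    (w : Monoid.Coprod G T) : Prop :=
  ¬ ∃ g : G, IsConj (Monoid.Coprod.inl g) w

/-- A generalized equation `w ∈ G * T` is solvable over `G` if there is a group `G'`
containing `G` as a subgroup (via an injective homomorphism) and a homomorphism
`T →* G'` such that the induced map `G * T →* G'` kills `w`. -/
def GenEqSolvable (G : Type u) (T : Type v) [Group G] [Group T]
    (w : Monoid.Coprod G T) : Prop :=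
  ∃ (G' : Type (max u v)) (_ : Group G') (i : G →* G') (f : T →* G'),
    Function.Injective i ∧ Monoid.Coprod.lift i f w = 1

open List FreeMonoid

namespace Monoid.Coprod

variable {A B : Type*} [Group A] [Group B]

def ofLetter (x : A ⊕ B) : A ∗ B := mk (of x)

@[simp] lemma ofLetter_inl (a : A) : ofLetter (.inl a : A ⊕ B) = inl a := rfl

@[simp] lemma ofLetter_inr (b : B) : ofLetter (.inr b : A ⊕ B) = inr b := rfl

@[simp] lemma inl_eq_one_iff {a : A} : (inl a : A ∗ B) = 1 ↔ a = 1 :=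
  map_eq_one_iff _ inl_injective

@[simp] lemma inr_eq_one_iff {b : B} : (inr b : A ∗ B) = 1 ↔ b = 1 :=
  map_eq_one_iff _ inr_injective

def wordProd (l : List (A ⊕ B)) : A ∗ B := mk (ofList l)

@[simp] lemma wordProd_nil : wordProd ([] : List (A ⊕ B)) = 1 := rfl

@[simp] lemma wordProd_cons (x : A ⊕ B) (l : List (A ⊕ B)) :
    wordProd (x :: l) = ofLetter x * wordProd l := by
  simp [wordProd, ofLetter, ofList_cons]

@[simp] lemma wordProd_append (l₁ l₂ : List (A ⊕ B)) :
    wordProd (l₁ ++ l₂) = wordProd l₁ * wordProd l₂ := by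
  simp [wordProd, ofList_append]

def IsReduced (l : List (A ⊕ B)) : Prop :=
  l.IsChain (fun x y => x.isLeft ≠ y.isLeft) ∧ ∀ x ∈ l, ofLetter x ≠ 1

lemma isReduced_nil : IsReduced ([] : List (A ⊕ B)) := by simp [IsReduced]

lemma IsReduced.of_cons {x : A ⊕ B} {l : List (A ⊕ B)} (h : IsReduced (x :: l)) :
    IsReduced l :=
  ⟨h.1.tail, fun y hy => h.2 y (mem_cons_of_mem _ hy)⟩

lemma IsReduced.of_append_left {l₁ l₂ : List (A ⊕ B)} (h : IsReduced (l₁ ++ l₂)) :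
    IsReduced l₁ :=
  ⟨h.1.left_of_append, fun y hy => h.2 y (mem_append_left _ hy)⟩

open scoped Classical in
noncomputable def pushLetter (x : A ⊕ B) (l : List (A ⊕ B)) : List (A ⊕ B) :=
  if ofLetter x = 1 then l else x :: l

def headInl : List (A ⊕ B) → A
  | .inl a :: _ => a
  | _ => 1

def headInr : List (A ⊕ B) → B
  | .inr b :: _ => b
  | _ => 1

def dropInl : List (A ⊕ B) → List (A ⊕ B)
  | .inl _ :: l => l
  | l => l

def dropInr : List (A ⊕ B) → List (A ⊕ B)
  | .inr _ :: l => l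
  | l => l

/-- On reduced words, `l ↦ (headInl l, dropInl l)` is a bijection onto
`A × {reduced words not starting in A}` with inverse `(a, t) ↦ pushLetter (.inl a) t`, and
`consLetter (.inl a)` is left multiplication by `a` on the first coordinate; this is why `A` (and
likewise `B`) acts. -/
noncomputable def consLetter : A ⊕ B → List (A ⊕ B) → List (A ⊕ B)
  | .inl a, l => pushLetter (.inl (a * headInl l)) (dropInl l)
  | .inr b, l => pushLetter (.inr (b * headInr l)) (dropInr l)

lemma wordProd_pushLetter (x : A ⊕ B) (l : List (A ⊕ B)) :
    wordProd (pushLetter x l) = ofLetter x * wordProd l := by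
  unfold pushLetter; split_ifs with h <;> simp [h]

lemma wordProd_consLetter (x : A ⊕ B) (l : List (A ⊕ B)) :
    wordProd (consLetter x l) = ofLetter x * wordProd l := by
  rcases x with a | b <;> rcases l with _ | ⟨a' | b', l⟩ <;>
    simp [consLetter, headInl, headInr, dropInl, dropInr, wordProd_pushLetter, mul_assoc]

lemma isReduced_pushLetter {x : A ⊕ B} {l : List (A ⊕ B)} (hl : IsReduced l)
    (hx : ∀ y ∈ l.head?, x.isLeft ≠ y.isLeft) : IsReduced (pushLetter x l) := by
  unfold pushLetter
  split_ifs with h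
  · exact hl
  · exact ⟨hl.1.cons hx, forall_mem_cons.2 ⟨h, hl.2⟩⟩

section Inl

variable {l t : List (A ⊕ B)}

lemma headInl_pushLetter (a : A) (ht : ∀ y ∈ t.head?, y.isRight) :
    headInl (pushLetter (.inl a) t) = a := by
  classical
  unfold pushLetter
  split_ifs with h
  · rcases t with _ | ⟨a' | b', t⟩ <;> simp_all [headInl]
  · rfl

lemma dropInl_pushLetter (a : A) (ht : ∀ y ∈ t.head?, y.isRight) :
    dropInl (pushLetter (.inl a) t) = t := by
  classical
  unfold pushLetter
  split_ifs with h
  · rcases t with _ | ⟨a' | b', t⟩ <;> simp_all [dropInl]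
  · rfl

lemma isReduced_dropInl (hl : IsReduced l) : IsReduced (dropInl l) := by
  rcases l with _ | ⟨a | b, l⟩
  exacts [hl, hl.of_cons, hl]

lemma isRight_of_mem_head?_dropInl (hl : IsReduced l) :
    ∀ y ∈ (dropInl l).head?, y.isRight := by
  rcases l with _ | ⟨a | b, l⟩
  · simp [dropInl]
  · exact fun y hy => by simpa using (isChain_cons.1 hl.1).1 y hy
  · simp [dropInl]

lemma pushLetter_headInl_dropInl (hl : IsReduced l) :
    pushLetter (.inl (headInl l)) (dropInl l) = l := by
  classical
  rcases l with _ | ⟨a | b, l⟩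
  · simp [pushLetter, headInl, dropInl]
  · simpa [pushLetter, headInl, dropInl] using hl.2 _ mem_cons_self
  · simp [pushLetter, headInl, dropInl]

lemma consLetter_inl_one (hl : IsReduced l) : consLetter (.inl 1) l = l := by
  simpa [consLetter] using pushLetter_headInl_dropInl hl

lemma consLetter_inl_mul (a₁ a₂ : A) (hl : IsReduced l) :
    consLetter (.inl (a₁ * a₂)) l = consLetter (.inl a₁) (consLetter (.inl a₂) l) := by
  have hhead := isRight_of_mem_head?_dropInl hl
  simp only [consLetter, headInl_pushLetter _ hhead, dropInl_pushLetter _ hhead, mul_assoc]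

end Inl

section Inr

variable {l t : List (A ⊕ B)}

lemma headInr_pushLetter (b : B) (ht : ∀ y ∈ t.head?, y.isLeft) :
    headInr (pushLetter (.inr b) t) = b := by
  classical
  unfold pushLetter
  split_ifs with h
  · rcases t with _ | ⟨a' | b', t⟩ <;> simp_all [headInr]
  · rfl

lemma dropInr_pushLetter (b : B) (ht : ∀ y ∈ t.head?, y.isLeft) :
    dropInr (pushLetter (.inr b) t) = t := by
  classical
  unfold pushLetter
  split_ifs with h
  · rcases t with _ | ⟨a' | b', t⟩ <;> simp_all [dropInr]
  · rfl

lemma isReduced_dropInr (hl : IsReduced l) : IsReduced (dropInr l) := by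
  rcases l with _ | ⟨a | b, l⟩
  exacts [hl, hl, hl.of_cons]

lemma isLeft_of_mem_head?_dropInr (hl : IsReduced l) :
    ∀ y ∈ (dropInr l).head?, y.isLeft := by
  rcases l with _ | ⟨a | b, l⟩
  · simp [dropInr]
  · simp [dropInr]
  · exact fun y hy => by simpa using (isChain_cons.1 hl.1).1 y hy

lemma pushLetter_headInr_dropInr (hl : IsReduced l) :
    pushLetter (.inr (headInr l)) (dropInr l) = l := by
  classical
  rcases l with _ | ⟨a | b, l⟩
  · simp [pushLetter, headInr, dropInr]
  · simp [pushLetter, headInr, dropInr]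
  · simpa [pushLetter, headInr, dropInr] using hl.2 _ mem_cons_self

lemma consLetter_inr_one (hl : IsReduced l) : consLetter (.inr 1) l = l := by
  simpa [consLetter] using pushLetter_headInr_dropInr hl

lemma consLetter_inr_mul (b₁ b₂ : B) (hl : IsReduced l) :
    consLetter (.inr (b₁ * b₂)) l = consLetter (.inr b₁) (consLetter (.inr b₂) l) := by
  have hhead := isLeft_of_mem_head?_dropInr hl
  simp only [consLetter, headInr_pushLetter _ hhead, dropInr_pushLetter _ hhead, mul_assoc]

end Inr

lemma isReduced_consLetter (x : A ⊕ B) {l : List (A ⊕ B)} (hl : IsReduced l) :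
    IsReduced (consLetter x l) := by
  rcases x with a | b
  · exact isReduced_pushLetter (isReduced_dropInl hl) fun y hy => by
      simpa using isRight_of_mem_head?_dropInl hl y hy
  · exact isReduced_pushLetter (isReduced_dropInr hl) fun y hy => by
      simpa using isLeft_of_mem_head?_dropInr hl y hy

lemma consLetter_eq_cons {x : A ⊕ B} {l : List (A ⊕ B)} (h : IsReduced (x :: l)) :
    consLetter x l = x :: l := by
  classical
  have hx : ofLetter x ≠ 1 := h.2 x mem_cons_self
  rcases x with a | b <;> rcases l with _ | ⟨a' | b', l⟩ <;>
    simp_all [consLetter, pushLetter, headInl, headInr, dropInl, dropInr, IsReduced]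

noncomputable def wordAction : A ∗ B →* Function.End {l : List (A ⊕ B) // IsReduced l} :=
  lift
    { toFun a l := ⟨consLetter (.inl a) l, isReduced_consLetter _ l.2⟩
      map_one' := funext fun l => Subtype.ext (consLetter_inl_one l.2)
      map_mul' a₁ a₂ := funext fun l => Subtype.ext (consLetter_inl_mul a₁ a₂ l.2) }
    { toFun b l := ⟨consLetter (.inr b) l, isReduced_consLetter _ l.2⟩
      map_one' := funext fun l => Subtype.ext (consLetter_inr_one l.2)
      map_mul' b₁ b₂ := funext fun l => Subtype.ext (consLetter_inr_mul b₁ b₂ l.2) }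

lemma wordAction_mul_apply (g h : A ∗ B) (l : {l : List (A ⊕ B) // IsReduced l}) :
    wordAction (g * h) l = wordAction g (wordAction h l) := by
  rw [map_mul]; rfl

lemma wordAction_ofLetter (x : A ⊕ B) (l : {l : List (A ⊕ B) // IsReduced l}) :
    (wordAction (ofLetter x) l).1 = consLetter x l.1 := by
  rcases x with a | b <;> rfl

lemma wordProd_wordAction (g : A ∗ B) (l : {l : List (A ⊕ B) // IsReduced l}) :
    wordProd (wordAction g l).1 = g * wordProd l.1 := by
  induction g using induction_on' with
  | one => rw [map_one, one_mul]; rfl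
  | inl_mul a g ih =>
    rw [wordAction_mul_apply, ← ofLetter_inl, wordAction_ofLetter, wordProd_consLetter, ih,
      mul_assoc]
  | inr_mul b g ih =>
    rw [wordAction_mul_apply, ← ofLetter_inr, wordAction_ofLetter, wordProd_consLetter, ih,
      mul_assoc]

lemma wordAction_wordProd {l : List (A ⊕ B)} (hl : IsReduced l) :
    wordAction (wordProd l) ⟨[], isReduced_nil⟩ = ⟨l, hl⟩ := by
  induction l with
  | nil => rfl
  | cons x l ih =>
    apply Subtype.ext
    rw [wordProd_cons, wordAction_mul_apply, wordAction_ofLetter,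
      ih hl.of_cons, consLetter_eq_cons hl]

theorem exists_isReduced_wordProd_eq (g : A ∗ B) : ∃ l, IsReduced l ∧ wordProd l = g :=
  ⟨_, (wordAction g ⟨[], isReduced_nil⟩).2, by simp [wordProd_wordAction]⟩

theorem IsReduced.eq_of_wordProd_eq {l₁ l₂ : List (A ⊕ B)} (h₁ : IsReduced l₁)
    (h₂ : IsReduced l₂) (h : wordProd l₁ = wordProd l₂) : l₁ = l₂ :=
  congrArg Subtype.val ((wordAction_wordProd h₁).symm.trans (h ▸ wordAction_wordProd h₂))

theorem IsReduced.wordProd_ne_one {l : List (A ⊕ B)} (hl : IsReduced l) (hne : l ≠ []) :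
    wordProd l ≠ 1 :=
  fun h => hne (hl.eq_of_wordProd_eq isReduced_nil h)

lemma wordProd_eq_ofLetter_of_length_le_one {l : List (A ⊕ B)} (hl : l.length ≤ 1) :
    ∃ x, wordProd l = ofLetter x := by
  match l, hl with
  | [], _ => exact ⟨.inl 1, by simp⟩
  | [x], _ => exact ⟨x, by simp⟩

lemma length_pushLetter_le (x : A ⊕ B) (l : List (A ⊕ B)) :
    (pushLetter x l).length ≤ l.length + 1 := by
  unfold pushLetter; split_ifs <;> simp

lemma length_consLetter_cons_le {x y : A ⊕ B} (h : x.isLeft = y.isLeft) (l : List (A ⊕ B)) :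
    (consLetter x (y :: l)).length ≤ l.length + 1 := by
  rcases x with a | b <;> rcases y with a' | b' <;> cases h <;> exact length_pushLetter_le _ _

/-- In the sense of Lyndon–Schupp, so single letters are cyclically reduced. -/
def IsCyclicallyReduced (l : List (A ⊕ B)) : Prop :=
  IsReduced l ∧ (l.length ≤ 1 ∨ ∀ x ∈ l.getLast?, ∀ y ∈ l.head?, x.isLeft ≠ y.isLeft)

/-- Conjugating `d m e` by `e`, with `d`, `e` in the same factor, gives the shorter reduced word
`(e d) m`. -/
theorem exists_isCyclicallyReduced_isConj (g : A ∗ B) :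
    ∃ l, IsCyclicallyReduced l ∧ IsConj (wordProd l) g := by
  obtain ⟨l, hl, rfl⟩ := exists_isReduced_wordProd_eq g
  induction hn : l.length using Nat.strong_induction_on generalizing l with
  | _ n ih =>
  rcases l with _ | ⟨d, l⟩
  · exact ⟨[], ⟨hl, by simp⟩, .refl _⟩
  rcases eq_nil_or_concat l with rfl | ⟨m, e, rfl⟩
  · exact ⟨[d], ⟨hl, by simp⟩, .refl _⟩
  rw [concat_eq_append] at hl hn ⊢
  by_cases hde : e.isLeft = d.isLeft
  · have hdm : IsReduced (d :: m) :=
      (by simpa using hl : IsReduced ((d :: m) ++ [e])).of_append_left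
    have hshorter : (consLetter e (d :: m)).length < n := by
      have := length_consLetter_cons_le hde m
      simp only [length_cons, length_append] at hn
      omega
    obtain ⟨l', hl', hconj⟩ := ih _ hshorter _ (isReduced_consLetter e hdm) rfl
    refine ⟨l', hl', hconj.trans (isConj_iff.2 ⟨(ofLetter e)⁻¹, ?_⟩)⟩
    simp [wordProd_consLetter, mul_assoc]
  · refine ⟨_, ⟨hl, .inr fun x hx y hy => ?_⟩, .refl _⟩
    rw [← cons_append, getLast?_concat, Option.mem_some_iff] at hx
    simp_all

lemma wordProd_flatten_replicate (l : List (A ⊕ B)) (n : ℕ) :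
    wordProd (replicate n l).flatten = wordProd l ^ n := by
  induction n with
  | zero => simp
  | succ n ih => rw [replicate_succ, flatten_cons, wordProd_append, ih, pow_succ']

lemma IsCyclicallyReduced.isReduced_flatten_replicate {l : List (A ⊕ B)}
    (hl : IsCyclicallyReduced l) (hlen : 2 ≤ l.length) (n : ℕ) :
    IsReduced (replicate n l).flatten := by
  have hne : l ≠ [] := ne_nil_of_length_pos (by omega)
  refine ⟨(isChain_flatten (by simp [hne.symm])).2 ⟨by simpa using fun _ => hl.1.1, ?_⟩, ?_⟩
  · exact isChain_replicate_of_rel _ (hl.2.resolve_left (by omega))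
  · intro y hy
    obtain ⟨_, hl', hy⟩ := mem_flatten.1 hy
    exact hl.1.2 y (eq_of_mem_replicate hl' ▸ hy)

theorem IsCyclicallyReduced.wordProd_pow_ne_one {l : List (A ⊕ B)} (hl : IsCyclicallyReduced l)
    (hlen : 2 ≤ l.length) {n : ℕ} (hn : n ≠ 0) : wordProd l ^ n ≠ 1 := by
  rw [← wordProd_flatten_replicate]
  refine (hl.isReduced_flatten_replicate hlen n).wordProd_ne_one ?_
  simp [hn, ne_nil_of_length_pos (by omega : 0 < l.length)]

lemma ofLetter_eq_one_of_isOfFinOrder (hA : ∀ a : A, IsOfFinOrder a → a = 1)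
    (hB : ∀ b : B, IsOfFinOrder b → b = 1) {x : A ⊕ B} (hx : IsOfFinOrder (ofLetter x)) :
    ofLetter x = 1 := by
  rcases x with a | b
  · simpa using hA a (inl_injective.isOfFinOrder_iff.1 hx)
  · simpa using hB b (inr_injective.isOfFinOrder_iff.1 hx)

theorem eq_one_of_isOfFinOrder (hA : ∀ a : A, IsOfFinOrder a → a = 1)
    (hB : ∀ b : B, IsOfFinOrder b → b = 1) {g : A ∗ B} (hg : IsOfFinOrder g) : g = 1 := by
  obtain ⟨l, hl, hconj⟩ := exists_isCyclicallyReduced_isConj g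
  have hl_fin := hconj.symm.isOfFinOrder hg
  rcases le_or_gt l.length 1 with hlen | hlen
  · obtain ⟨x, hx⟩ := wordProd_eq_ofLetter_of_length_le_one hlen
    rw [hx] at hconj hl_fin
    rwa [ofLetter_eq_one_of_isOfFinOrder hA hB hl_fin, isConj_one_right] at hconj
  · obtain ⟨n, hn, hpow⟩ := isOfFinOrder_iff_pow_eq_one.1 hl_fin
    exact absurd hpow (hl.wordProd_pow_ne_one hlen hn.ne')

def invWord (l : List (A ⊕ B)) : List (A ⊕ B) := (l.map (Sum.map (·⁻¹) (·⁻¹))).reverse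

lemma wordProd_invWord (l : List (A ⊕ B)) : wordProd (invWord l) = (wordProd l)⁻¹ := rfl

@[simp] lemma ofLetter_map_inv (x : A ⊕ B) :
    ofLetter (Sum.map (·⁻¹) (·⁻¹) x) = (ofLetter x)⁻¹ := by
  rcases x with a | b <;> simp

lemma isReduced_append_singleton {l : List (A ⊕ B)} {c : A ⊕ B} (hl : IsReduced l)
    (hc : ofLetter c ≠ 1) (hlc : ∀ x ∈ l.getLast?, x.isLeft ≠ c.isLeft) : IsReduced (l ++ [c]) :=
  ⟨hl.1.append (isChain_singleton c) (by simpa using hlc), forall_mem_append.2 ⟨hl.2, by simpa⟩⟩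

lemma isReduced_palindrome {L : List (A ⊕ B)} {c : A ⊕ B} (h : IsReduced (L ++ [c])) :
    IsReduced (L ++ c :: invWord L) := by
  have hL := (isChain_append.1 h.1)
  refine ⟨?_, ?_⟩
  · rw [← singleton_append, ← append_assoc]
    refine h.1.append ?_ ?_
    · refine isChain_reverse.2 (isChain_map _ |>.2 (hL.1.imp fun x y hxy => ?_))
      simpa using hxy.symm
    · intro x hx y hy
      simp only [getLast?_append, getLast?_singleton, Option.some_or, Option.mem_some_iff] at hx
      simp only [invWord, head?_reverse, getLast?_map, Option.mem_map] at hy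
      obtain ⟨z, hz, rfl⟩ := hy
      simpa [hx] using (hL.2.2 z hz c (by simp)).symm
  · simp only [invWord, mem_append, mem_cons, mem_reverse, List.mem_map]
    rintro x (hx | rfl | ⟨y, hy, rfl⟩)
    · exact h.2 x (by simp [hx])
    · exact h.2 x (by simp)
    · simpa using h.2 y (by simp [hy])

lemma exists_ofLetter_eq_conj {d c : A ⊕ B} (h : d.isLeft = c.isLeft) :
    ∃ c', ofLetter c' = ofLetter d * ofLetter c * (ofLetter d)⁻¹ := by
  rcases d with a | b <;> rcases c with a' | b' <;> cases h
  exacts [⟨.inl (a * a' * a⁻¹), by simp⟩, ⟨.inr (b * b' * b⁻¹), by simp⟩]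

/-- Absorb the last letter of `L` into `c` as long as both lie in the same factor. -/
lemma exists_isReduced_palindrome {c : A ⊕ B} (hc : ofLetter c ≠ 1) {L : List (A ⊕ B)}
    (hL : IsReduced L) : ∃ L' c', IsReduced (L' ++ [c']) ∧
      wordProd L * ofLetter c * (wordProd L)⁻¹ = wordProd (L' ++ c' :: invWord L') := by
  induction L using reverseRecOn generalizing c with
  | nil => exact ⟨[], c, by simpa [IsReduced] using hc, by simp [invWord]⟩
  | append_singleton L d ih =>
    by_cases hdc : d.isLeft = c.isLeft
    · obtain ⟨c', hc'⟩ := exists_ofLetter_eq_conj hdc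
      obtain ⟨L', c'', hred, heq⟩ := ih (c := c') (by simpa [hc'] using hc) hL.of_append_left
      refine ⟨L', c'', hred, ?_⟩
      rw [← heq, hc', wordProd_append]
      simp [mul_assoc]
    · refine ⟨L ++ [d], c, isReduced_append_singleton hL hc (by simpa using hdc), ?_⟩
      simp [wordProd_invWord, mul_assoc]

theorem IsCyclicallyReduced.not_isConj_ofLetter {l : List (A ⊕ B)} (hl : IsCyclicallyReduced l)
    (hlen : 2 ≤ l.length) (x : A ⊕ B) : ¬IsConj (ofLetter x) (wordProd l) := by
  intro h
  obtain ⟨z, hz⟩ := isConj_iff.1 h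
  by_cases hx : ofLetter x = 1
  · rw [hx, mul_one, mul_inv_cancel] at hz
    exact hl.1.wordProd_ne_one (ne_nil_of_length_pos (by omega)) hz.symm
  obtain ⟨L, hL, rfl⟩ := exists_isReduced_wordProd_eq z
  obtain ⟨L', c, hred, heq⟩ := exists_isReduced_palindrome hx hL
  obtain rfl := (isReduced_palindrome hred).eq_of_wordProd_eq hl.1 (heq ▸ hz)
  rcases L' with _ | ⟨y, L'⟩
  · simp [invWord] at hlen
  · refine hl.2.resolve_left (by omega) (Sum.map (·⁻¹) (·⁻¹) y) ?_ y rfl (by simp)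
    simp [invWord, getLast?_cons, getLast?_append]

section Expansion

variable {C : Type*} [Group C]

noncomputable def conjInr (t : C) : A ∗ B →* (A ∗ B) ∗ C :=
  lift (inl.comp inl) ((MulAut.conj (inr t)).toMonoidHom.comp (inl.comp inr))

/-- Each block starts and ends in the factor (`inl` or `inr`) of the letter it replaces, so
expanding letter by letter preserves (cyclic) reducedness. -/
def expandLetter (t : C) : A ⊕ B → List ((A ∗ B) ⊕ C)
  | .inl a => [.inl (inl a)]
  | .inr b => [.inr t, .inl (inr b), .inr t⁻¹]

variable {t : C}

lemma wordProd_flatMap_expandLetter (l : List (A ⊕ B)) :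
    wordProd (l.flatMap (expandLetter t)) = conjInr t (wordProd l) := by
  induction l with
  | nil => simp
  | cons x l ih =>
    rcases x with a | b <;> simp [expandLetter, conjInr, MulAut.conj, ih, mul_assoc]

lemma expandLetter_ne_nil (t : C) (x : A ⊕ B) : expandLetter t x ≠ [] := by
  rcases x with a | b <;> simp [expandLetter]

lemma isLeft_of_mem_head?_expandLetter {x : A ⊕ B} {y : (A ∗ B) ⊕ C}
    (hy : y ∈ (expandLetter t x).head?) : y.isLeft = x.isLeft := by
  rcases x with a | b <;> simp only [expandLetter, head?_cons, Option.mem_some_iff] at hy <;>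
    simp [← hy]

lemma isLeft_of_mem_getLast?_expandLetter {x : A ⊕ B} {y : (A ∗ B) ⊕ C}
    (hy : y ∈ (expandLetter t x).getLast?) : y.isLeft = x.isLeft := by
  rcases x with a | b <;> simp [expandLetter] at hy <;> simp [← hy]

lemma IsReduced.flatMap_expandLetter (ht : t ≠ 1) {l : List (A ⊕ B)} (hl : IsReduced l) :
    IsReduced (l.flatMap (expandLetter t)) := by
  have hred : ∀ x ∈ l, IsReduced (expandLetter t x) := by
    rintro (a | b) hx <;> have := hl.2 _ hx
    · simpa [expandLetter, IsReduced] using this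
    · simpa [expandLetter, IsReduced, ht] using this
  refine ⟨?_, fun y hy => ?_⟩
  · rw [flatMap_def, isChain_flatten (by simpa using fun x _ => (expandLetter_ne_nil t x).symm)]
    refine ⟨forall_mem_map.2 fun x hx => (hred x hx).1, isChain_map _ |>.2 ?_⟩
    refine hl.1.imp fun x y hxy u hu v hv => ?_
    rwa [isLeft_of_mem_getLast?_expandLetter hu, isLeft_of_mem_head?_expandLetter hv]
  · obtain ⟨x, hx, hy⟩ := mem_flatMap.1 hy
    exact (hred x hx).2 y hy

lemma isLeft_of_mem_head?_flatMap_expandLetter {l : List (A ⊕ B)} {v : (A ∗ B) ⊕ C}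
    (hv : v ∈ (l.flatMap (expandLetter t)).head?) : ∃ x ∈ l.head?, v.isLeft = x.isLeft := by
  rcases l with _ | ⟨x, l⟩
  · simp at hv
  · rw [flatMap_cons, head?_append_of_ne_nil _ (expandLetter_ne_nil t x)] at hv
    exact ⟨x, rfl, isLeft_of_mem_head?_expandLetter hv⟩

lemma isLeft_of_mem_getLast?_flatMap_expandLetter {l : List (A ⊕ B)} {u : (A ∗ B) ⊕ C}
    (hu : u ∈ (l.flatMap (expandLetter t)).getLast?) : ∃ x ∈ l.getLast?, u.isLeft = x.isLeft := by
  rcases eq_nil_or_concat l with rfl | ⟨l, x, rfl⟩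
  · simp at hu
  · rw [concat_eq_append, flatMap_append, flatMap_singleton,
      getLast?_append_of_ne_nil _ (expandLetter_ne_nil t x)] at hu
    exact ⟨x, by simp, isLeft_of_mem_getLast?_expandLetter hu⟩

lemma IsCyclicallyReduced.flatMap_expandLetter (ht : t ≠ 1) {l : List (A ⊕ B)}
    (hl : IsCyclicallyReduced l) (hlen : 2 ≤ l.length) :
    IsCyclicallyReduced (l.flatMap (expandLetter t)) ∧ 2 ≤ (l.flatMap (expandLetter t)).length := by
  refine ⟨⟨hl.1.flatMap_expandLetter ht, .inr fun u hu v hv => ?_⟩, ?_⟩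
  · obtain ⟨x, hx, hux⟩ := isLeft_of_mem_getLast?_flatMap_expandLetter hu
    obtain ⟨y, hy, hvy⟩ := isLeft_of_mem_head?_flatMap_expandLetter hv
    rw [hux, hvy]
    exact hl.2.resolve_left (by omega) x hx y hy
  · match l, hlen with
    | x :: y :: l, _ =>
      have := length_pos_of_ne_nil (expandLetter_ne_nil t x)
      have := length_pos_of_ne_nil (expandLetter_ne_nil t y)
      simp only [flatMap_cons, length_append]
      omega

theorem not_isConj_inl_conjInr (ht : t ≠ 1) {g : A ∗ B}
    (hg : ∀ x : A ⊕ B, ¬IsConj (ofLetter x) g) (k : A ∗ B) : ¬IsConj (inl k) (conjInr t g) := by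
  intro hk
  obtain ⟨l, hl, hconj⟩ := exists_isCyclicallyReduced_isConj g
  rcases le_or_gt l.length 1 with hlen | hlen
  · obtain ⟨x, hx⟩ := wordProd_eq_ofLetter_of_length_le_one hlen
    exact hg x (hx ▸ hconj)
  obtain ⟨hl', hlen'⟩ := hl.flatMap_expandLetter ht hlen
  refine hl'.not_isConj_ofLetter hlen' (.inl k) (hk.trans ?_)
  rw [wordProd_flatMap_expandLetter]
  exact ((conjInr t).map_isConj hconj).symm

end Expansion

end Monoid.Coprod

open Monoid.Coprod

theorem GenEqSolvable.of_conjInr {G : Type u} {T : Type v} [Group G] [Group T] {C : Type}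
    [Group C] (t : C) {w : G ∗ T} (h : GenEqSolvable (G ∗ T) C (conjInr t w)) :
    GenEqSolvable G T w := by
  obtain ⟨G', _, i, f, hi, hw⟩ := h
  refine ⟨G', _, i.comp inl, (MulAut.conj (f t)).toMonoidHom.comp (i.comp inr),
    hi.comp inl_injective, ?_⟩
  have : lift (i.comp inl) ((MulAut.conj (f t)).toMonoidHom.comp (i.comp inr)) =
      (lift i f).comp (conjInr t) := by
    ext <;> simp [conjInr, MulAut.conj]
  rw [this, MonoidHom.comp_apply, hw]

theorem genEqSolvable_of_isConj_inr {G : Type u} {T : Type v} [Group G] [Group T] {w : G ∗ T}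
    {s : T} (h : IsConj (inr s) w) : GenEqSolvable G T w := by
  obtain ⟨c, rfl⟩ := isConj_iff.1 h
  exact ⟨G ∗ T, inferInstance, inl, 1, inl_injective, by simp⟩

/-- If the Levin conjecture holds (every nontrivial equation over a torsion-free
group is solvable over it), then every nontrivial generalized equation with
torsion-free variable group over a torsion-free group is solvable over it. -/
theorem levin_implies_generalized_levin
    (levin : ∀ (G : Type (max u v)) [Group G], (∀ g : G, IsOfFinOrder g → g = 1) →
      ∀ w : Monoid.Coprod G (Multiplicative ℤ),
        GenEqNontrivial G (Multiplicative ℤ) w → GenEqSolvable G (Multiplicative ℤ) w) :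
    ∀ (G : Type u) (T : Type v) [Group G] [Group T],
      (∀ g : G, IsOfFinOrder g → g = 1) → (∀ s : T, IsOfFinOrder s → s = 1) →
      ∀ w : Monoid.Coprod G T, GenEqNontrivial G T w → GenEqSolvable G T w := by
  intro G T _ _ hG hT w hw
  by_cases hinr : ∃ s : T, IsConj (inr s) w
  · obtain ⟨s, hs⟩ := hinr
    exact genEqSolvable_of_isConj_inr hs
  have hletter : ∀ x : G ⊕ T, ¬IsConj (ofLetter x) w := by
    rintro (g | s) h
    exacts [hw ⟨g, h⟩, hinr ⟨s, h⟩]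
  have ht : Multiplicative.ofAdd (1 : ℤ) ≠ 1 := by decide
  exact .of_conjInr _ (levin _ (fun _ => eq_one_of_isOfFinOrder hG hT) _
    fun ⟨k, hk⟩ => not_isConj_inl_conjInr ht hletter k hk)
end

section
/- Let X and Y be nonempty finite subsets of a group H with |Y| ≥ 2, and suppose that all uniquely decomposable elements of the product set XY have the same right factor y ∈ Y. Then the product set X·Y·Y⁻¹·X⁻¹ contains no element uniquely decomposable as a product x₁y₁y₂⁻¹x₂⁻¹ with x₁, x₂ ∈ X and y₁, y₂ ∈ Y. -/
/-- If `X, Y` are nonempty finite subsets of a group `H` with `|Y| ≥ 2` and all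
uniquely decomposable elements of `XY` have the same right factor `y ∈ Y`, then the
product set `X·Y·Y⁻¹·X⁻¹` contains no element uniquely decomposable as
`x₁ y₁ y₂⁻¹ x₂⁻¹` with `x₁, x₂ ∈ X`, `y₁, y₂ ∈ Y`. -/
theorem no_unique_decomposition_in_XYYinvXinv {H : Type*} [Group H]
    (X Y : Finset H) (hX : X.Nonempty) (hY : Y.Nonempty) (hY2 : 2 ≤ Y.card)
    (y : H) (hy : y ∈ Y)
    (hsame : ∀ x' ∈ X, ∀ y' ∈ Y, UniqueMul X Y x' y' → y' = y) :
    ¬ ∃ u : H, ∃! q : H × H × H × H,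
        q.1 ∈ X ∧ q.2.1 ∈ Y ∧ q.2.2.1 ∈ Y ∧ q.2.2.2 ∈ X ∧
          q.1 * q.2.1 * q.2.2.1⁻¹ * q.2.2.2⁻¹ = u := by
  rintro ⟨u, ⟨x₁, y₁, y₂, x₂⟩, ⟨hx₁, hy₁, hy₂, hx₂, hprod⟩, huniq⟩
  -- x₁ y₁ is uniquely decomposable in XY
  have h1 : UniqueMul X Y x₁ y₁ := by
    intro a b ha hb hab
    have := huniq (a, b, y₂, x₂) ⟨ha, hb, hy₂, hx₂, by
      simp only []
      rw [hab, hprod]⟩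
    simp only [Prod.mk.injEq] at this
    exact ⟨this.1, this.2.1⟩
  -- x₂ y₂ is uniquely decomposable in XY
  have h2 : UniqueMul X Y x₂ y₂ := by
    intro a b ha hb hab
    have := huniq (x₁, y₁, b, a) ⟨hx₁, hy₁, hb, ha, by
      have : b⁻¹ * a⁻¹ = y₂⁻¹ * x₂⁻¹ := by
        rw [← mul_inv_rev, ← mul_inv_rev, hab]
      calc x₁ * y₁ * b⁻¹ * a⁻¹ = x₁ * y₁ * (b⁻¹ * a⁻¹) := by group
        _ = x₁ * y₁ * (y₂⁻¹ * x₂⁻¹) := by rw [this]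
        _ = u := by rw [← hprod]; group⟩
    simp only [Prod.mk.injEq] at this
    exact ⟨this.2.2.2, this.2.2.1⟩
  have hy₁y : y₁ = y := hsame x₁ hx₁ y₁ hy₁ h1
  have hy₂y : y₂ = y := hsame x₂ hx₂ y₂ hy₂ h2
  rw [hy₁y, hy₂y] at hprod
  obtain ⟨y', hy', hne⟩ := Finset.exists_mem_ne (s:=Y) (by omega) y
  have := huniq (x₁, y', y', x₂) ⟨hx₁, hy', hy', hx₂, by
    rw [← hprod]; group⟩
  simp only [Prod.mk.injEq] at this
  exact hne (this.2.1.trans hy₁y)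
end

section
/- The Levin conjecture (every nontrivial equation over a torsion-free group is solvable over it) implies that every solvable nontrivial equation over a torsion-free group is magnusian. -/
open Monoid Function

namespace LSMaux


theorem finOrder_of_injective {G H : Type*} [Group G] [Group H] (f : G →* H)
    (hf : Function.Injective f) {a : G} (h : IsOfFinOrder (f a)) : IsOfFinOrder a := by
  obtain ⟨k, hk, hpow⟩ := isOfFinOrder_iff_pow_eq_one.mp h
  exact isOfFinOrder_iff_pow_eq_one.mpr ⟨k, hk, hf (by rw [map_pow, hpow, map_one])⟩

theorem finOrder_map {G H : Type*} [Group G] [Group H] (f : G →* H)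
    {a : G} (h : IsOfFinOrder a) : IsOfFinOrder (f a) := by
  obtain ⟨k, hk, hpow⟩ := isOfFinOrder_iff_pow_eq_one.mp h
  exact isOfFinOrder_iff_pow_eq_one.mpr ⟨k, hk, by rw [← map_pow, hpow, map_one]⟩

variable {ι : Type*} {M : ι → Type*} [∀ i, Group (M i)]

theorem word_prod_injective [DecidableEq ι] [∀ i, DecidableEq (M i)] :
    Function.Injective (Monoid.CoprodI.Word.prod (M := M)) := by
  have : (Monoid.CoprodI.Word.prod (M := M)) = (Monoid.CoprodI.Word.equiv (M := M)).symm := rfl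
  rw [this]
  exact (Monoid.CoprodI.Word.equiv (M := M)).symm.injective



variable {ι : Type*} {M : ι → Type*} [∀ i, Group (M i)]

theorem exists_pow_word (u : Monoid.CoprodI.Word M) (hne : u.toList ≠ [])
    (hij : ∀ a ∈ u.toList.getLast?, ∀ b ∈ u.toList.head?, a.1 ≠ b.1) :
    ∀ n : ℕ, ∃ w : Monoid.CoprodI.Word M, w.prod = u.prod ^ (n + 1) ∧ w.toList ≠ [] ∧
      w.toList.head? = u.toList.head? := by
  intro n
  induction n with
  | zero => exact ⟨u, by simp, hne, rfl⟩
  | succ n ih =>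
    obtain ⟨w, hw, hwne, hwhead⟩ := ih
    refine ⟨⟨u.toList ++ w.toList, ?_, ?_⟩, ?_, by simp [hne], ?_⟩
    · intro l hl
      rcases List.mem_append.mp hl with h | h
      · exact u.ne_one l h
      · exact w.ne_one l h
    · refine List.isChain_append.mpr ⟨u.chain_ne, w.chain_ne, ?_⟩
      intro a ha b hb
      rw [hwhead] at hb
      exact hij a ha b hb
    · show List.prod (List.map _ (u.toList ++ w.toList)) = _
      rw [List.map_append, List.prod_append]
      have h1 : List.prod (List.map (fun l => Monoid.CoprodI.of l.snd) u.toList) = u.prod := rfl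
      have h2 : List.prod (List.map (fun l => Monoid.CoprodI.of l.snd) w.toList) = w.prod := rfl
      rw [h1, h2, hw, ← pow_succ']
    · show (u.toList ++ w.toList).head? = _
      rcases hu : u.toList with _ | ⟨a, l⟩
      · exact absurd hu hne
      · simp [hu]

theorem conj_pow'' {G : Type*} [Group G] {c g : G} {k : ℕ} :
    (c⁻¹ * g * c) ^ k = c⁻¹ * g ^ k * c := by
  induction k with
  | zero => group
  | succ k ihk =>
    rw [pow_succ, ihk, pow_succ]
    group

theorem coprodI_torsionFree (htf : ∀ i (m : M i), IsOfFinOrder m → m = 1) :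
    ∀ g : Monoid.CoprodI M, IsOfFinOrder g → g = 1 := by
  classical
  suffices H : ∀ (n : ℕ) (u : Monoid.CoprodI.Word M), u.toList.length ≤ n →
      IsOfFinOrder u.prod → u.toList = [] by
    intro g hg
    have hgp : (Monoid.CoprodI.Word.equiv g).prod = g :=
      (Monoid.CoprodI.Word.equiv (M := M)).symm_apply_apply g
    have hempty : (Monoid.CoprodI.Word.equiv g).toList = [] :=
      H _ (Monoid.CoprodI.Word.equiv g) le_rfl (by rwa [hgp])
    have : Monoid.CoprodI.Word.equiv g = Monoid.CoprodI.Word.empty :=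
      Monoid.CoprodI.Word.ext hempty
    rw [← hgp, this, Monoid.CoprodI.Word.prod_empty]
  intro n
  induction n with
  | zero =>
    intro u hu _
    exact List.length_eq_zero_iff.mp (Nat.le_zero.mp hu)
  | succ n ih =>
    intro u hlen hord
    rcases hu : u.toList with _ | ⟨⟨i, a⟩, t⟩
    · rfl
    rcases ht : t with _ | ⟨l₁, t₁⟩
    · -- singleton word: u.prod = of a
      exfalso
      have hprod : u.prod = Monoid.CoprodI.of a := by
        show List.prod (List.map _ u.toList) = _
        rw [hu, ht]; simp
      have : IsOfFinOrder a := by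
        obtain ⟨k, hk, hpow⟩ := isOfFinOrder_iff_pow_eq_one.mp hord
        refine isOfFinOrder_iff_pow_eq_one.mpr ⟨k, hk, ?_⟩
        apply Monoid.CoprodI.of_injective i
        rw [map_pow, ← hprod, hpow, map_one]
      exact u.ne_one ⟨i, a⟩ (by rw [hu]; exact List.mem_cons_self) (htf i a this)
    · -- length ≥ 2
      have htne : t ≠ [] := by rw [ht]; simp
      have hune : u.toList ≠ [] := by rw [hu]; simp
      rcases hL : t.getLast htne with ⟨j, b⟩
      have hULast : u.toList.getLast? = some ⟨j, b⟩ := by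
        rw [hu, ht, List.getLast?_cons_cons, ← ht, List.getLast?_eq_getLast htne, hL]
      by_cases hcyc : j = i
      · -- cyclic reduction
        subst hcyc
        exfalso
        have htl : t = t.dropLast ++ [⟨j, b⟩] := by
          conv_lhs => rw [← List.dropLast_append_getLast htne]
          rw [hL]
        -- decompose the product
        have hup : u.prod = Monoid.CoprodI.of a *
            ((t.dropLast.map fun l => Monoid.CoprodI.of l.snd).prod * Monoid.CoprodI.of b) := by
          show List.prod (List.map _ u.toList) = _
          rw [hu]
          conv_lhs => rw [htl]
          simp [List.map_append]
        set P := (t.dropLast.map fun l => Monoid.CoprodI.of l.snd).prod with hP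
        have hg2 : (Monoid.CoprodI.of a)⁻¹ * u.prod * Monoid.CoprodI.of a
            = P * Monoid.CoprodI.of (b * a) := by
          rw [hup, map_mul]
          group
        have hordg2 : IsOfFinOrder ((Monoid.CoprodI.of a)⁻¹ * u.prod * Monoid.CoprodI.of a) := by
          obtain ⟨k, hk, hpow⟩ := isOfFinOrder_iff_pow_eq_one.mp hord
          refine isOfFinOrder_iff_pow_eq_one.mpr ⟨k, hk, ?_⟩
          rw [conj_pow'', hpow]
          group
        -- chain facts
        have hchain_t : t.Chain' (fun l l' => l.1 ≠ l'.1) := by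
          have := u.chain_ne
          rw [hu] at this
          exact this.tail
        have hchain_split := (List.isChain_append.mp (htl ▸ hchain_t))
        have hchain_tl : t.dropLast.Chain' (fun l l' => l.1 ≠ l'.1) := hchain_split.1
        have hbdry : ∀ x ∈ t.dropLast.getLast?, x.1 ≠ j := by
          intro x hx
          exact hchain_split.2.2 x hx ⟨j, b⟩ (by simp)
        have hmem_tl : ∀ l ∈ t.dropLast, l ∈ u.toList := by
          intro l hl
          rw [hu]
          exact List.mem_cons_of_mem _ (htl ▸ List.mem_append_left _ hl)
        have hlen_t : t.length ≤ n := by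
          have : u.toList.length = t.length + 1 := by rw [hu]; simp
          omega
        have hlen_tl : t.dropLast.length ≤ n := by
          have h1 := List.length_dropLast (xs := t)
          omega
        by_cases hba : b * a = 1
        · -- conjugate is prod of dropLast
          have hw2 : ∃ w2 : Monoid.CoprodI.Word M, w2.toList = t.dropLast :=
            ⟨⟨t.dropLast, fun l hl => u.ne_one l (hmem_tl l hl), hchain_tl⟩, rfl⟩
          obtain ⟨w2, hw2⟩ := hw2
          have hw2prod : w2.prod = P := by
            show List.prod (List.map _ w2.toList) = _
            rw [hw2, ← hP]
          have hw2nil : w2.toList = [] := by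
            apply ih w2 (by rw [hw2]; exact hlen_tl)
            rw [hw2prod]
            have : P = (Monoid.CoprodI.of a)⁻¹ * u.prod * Monoid.CoprodI.of a := by
              rw [hg2, hba, map_one, mul_one]
            rw [this]
            exact hordg2
          have hw2empty : w2 = Monoid.CoprodI.Word.empty :=
            Monoid.CoprodI.Word.ext (by simpa using hw2nil)
          have hP1 : P = 1 := by
            rw [← hw2prod, hw2empty, Monoid.CoprodI.Word.prod_empty]
          have hab : a * b = 1 := by
            rw [eq_inv_of_mul_eq_one_left hba]
            group
          have hu1 : u.prod = 1 := by
            rw [hup, hP1, one_mul, ← map_mul, hab, map_one]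
          have : u = Monoid.CoprodI.Word.empty := word_prod_injective (by
            rw [hu1, Monoid.CoprodI.Word.prod_empty])
          rw [this] at hu
          simp at hu
        · -- new shorter word ending with ⟨j, b*a⟩
          have hw2 : ∃ w2 : Monoid.CoprodI.Word M,
              w2.toList = t.dropLast ++ [⟨j, b * a⟩] := by
            refine ⟨⟨t.dropLast ++ [⟨j, b * a⟩], ?_, ?_⟩, rfl⟩
            · intro l hl
              rcases List.mem_append.mp hl with h | h
              · exact u.ne_one l (hmem_tl l h)
              · simp at h
                subst h
                exact hba
            · refine List.isChain_append.mpr ⟨hchain_tl, List.isChain_singleton _, ?_⟩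
              intro x hx y hy
              simp at hy
              subst hy
              exact hbdry x hx
          obtain ⟨w2, hw2⟩ := hw2
          have hw2prod : w2.prod = P * Monoid.CoprodI.of (b * a) := by
            show List.prod (List.map _ w2.toList) = _
            rw [hw2, List.map_append, List.prod_append, ← hP]
            simp
          have : w2.toList = [] := by
            apply ih w2 (by
              rw [hw2]
              have h1 := List.length_dropLast (xs := t)
              have h2 := List.length_pos_iff.mpr htne
              simp only [List.length_append, List.length_cons, List.length_nil]
              omega)
            rw [hw2prod, ← hg2]
            exact hordg2
          rw [hw2] at this
          simp at this
      · -- heads and tails in different factors: positive powers are nonempty words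
        exfalso
        obtain ⟨k, hk, hpow⟩ := isOfFinOrder_iff_pow_eq_one.mp hord
        obtain ⟨m, rfl⟩ : ∃ m, k = m + 1 := ⟨k - 1, by omega⟩
        obtain ⟨w2, hw2prod, hw2ne, _⟩ := exists_pow_word u hune (by
          intro x hx y hy
          rw [Option.mem_def, hULast] at hx
          rw [Option.mem_def, hu, List.head?_cons] at hy
          obtain rfl : (⟨j, b⟩ : Σ i, M i) = x := Option.some.inj hx
          obtain rfl : (⟨i, a⟩ : Σ i, M i) = y := Option.some.inj hy
          exact hcyc) m
        have : w2 = Monoid.CoprodI.Word.empty := word_prod_injective (by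
          rw [hw2prod, hpow, Monoid.CoprodI.Word.prod_empty])
        rw [this] at hw2ne
        simp at hw2ne



section Shift

variable (B : Type*) [Group B]

abbrev NZ := Monoid.CoprodI (fun _ : ℤ => B)

def σh (d : ℤ) : NZ B →* NZ B :=
  Monoid.CoprodI.lift (fun i => Monoid.CoprodI.of (M := fun _ : ℤ => B) (i := i + d))

@[simp] lemma σh_of (d i : ℤ) (b : B) :
    σh B d (Monoid.CoprodI.of (M := fun _ : ℤ => B) (i := i) b)
      = Monoid.CoprodI.of (M := fun _ : ℤ => B) (i := i + d) b :=
  Monoid.CoprodI.lift_of _ _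

lemma σh_σh (d e : ℤ) (x : NZ B) : σh B d (σh B e x) = σh B (e + d) x := by
  have : (σh B d).comp (σh B e) = σh B (e + d) := by
    apply Monoid.CoprodI.ext_hom
    intro i
    ext b
    simp [add_assoc]
  exact DFunLike.congr_fun this x

lemma σh_zero (x : NZ B) : σh B 0 x = x := by
  have : σh B (0 : ℤ) = MonoidHom.id _ := by
    apply Monoid.CoprodI.ext_hom
    intro i
    ext b
    simp
  rw [this]; rfl

def σe (d : ℤ) : NZ B ≃* NZ B :=
  MonoidHom.toMulEquiv (σh B d) (σh B (-d))
    (by ext x; simp [MonoidHom.comp_apply, σh_σh, σh_zero])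
    (by ext x; simp [MonoidHom.comp_apply, σh_σh, σh_zero])

@[simp] lemma σe_apply (d : ℤ) (x : NZ B) : σe B d x = σh B d x := rfl

def Φz : Multiplicative ℤ →* MulAut (NZ B) where
  toFun z := σe B (Multiplicative.toAdd z)
  map_one' := by
    apply MulEquiv.ext
    intro x
    show σh B _ x = x
    simpa using σh_zero B x
  map_mul' a b := by
    apply MulEquiv.ext
    intro x
    show σh B _ x = σh B _ (σh B _ x)
    rw [σh_σh, toAdd_mul, add_comm]

abbrev SDB := SemidirectProduct (NZ B) (Multiplicative ℤ) (Φz B)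

@[simp] lemma Φz_apply (z : Multiplicative ℤ) (x : NZ B) :
    Φz B z x = σh B (Multiplicative.toAdd z) x := rfl

def φem : Monoid.Coprod B (Multiplicative ℤ) →* SDB B :=
  Monoid.Coprod.lift
    (SemidirectProduct.inl.comp (Monoid.CoprodI.of (M := fun _ : ℤ => B) (i := 0)))
    SemidirectProduct.inr

def fM : NZ B →* Monoid.Coprod B (Multiplicative ℤ) :=
  Monoid.CoprodI.lift (fun i =>
    (MulAut.conj (Monoid.Coprod.inr (Multiplicative.ofAdd i))).toMonoidHom.comp
      Monoid.Coprod.inl)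

lemma fM_compat : ∀ z : Multiplicative ℤ,
    (fM B).comp ((Φz B) z).toMonoidHom
      = (MulAut.conj ((Monoid.Coprod.inr : Multiplicative ℤ →* Monoid.Coprod B (Multiplicative ℤ)) z)).toMonoidHom.comp (fM B) := by
  intro z
  apply Monoid.CoprodI.ext_hom
  intro i
  ext b
  simp only [MonoidHom.comp_apply, MulEquiv.coe_toMonoidHom, Φz_apply, σh_of, fM,
    Monoid.CoprodI.lift_of, MulAut.conj_apply]
  rw [add_comm i (Multiplicative.toAdd z), ofAdd_add, ofAdd_toAdd]
  simp [map_mul, mul_inv_rev, mul_assoc]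

def πem : SDB B →* Monoid.Coprod B (Multiplicative ℤ) :=
  SemidirectProduct.lift (fM B) Monoid.Coprod.inr (fM_compat B)

lemma πem_φem : (πem B).comp (φem B) = MonoidHom.id _ := by
  apply Monoid.Coprod.hom_ext
  · ext b
    show πem B (φem B (Monoid.Coprod.inl b)) = Monoid.Coprod.inl b
    have h1 : φem B (Monoid.Coprod.inl b)
        = SemidirectProduct.inl (Monoid.CoprodI.of (M := fun _ : ℤ => B) (i := 0) b) := by
      simp [φem]
    rw [h1, πem, SemidirectProduct.lift_inl]
    show fM B (Monoid.CoprodI.of b) = _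
    simp only [fM, Monoid.CoprodI.lift_of]
    show (MulAut.conj (Monoid.Coprod.inr (Multiplicative.ofAdd (0:ℤ)))) _ = _
    simp
  · apply MonoidHom.ext_mint
    show πem B (φem B (Monoid.Coprod.inr _)) = Monoid.Coprod.inr _
    have h1 : φem B (Monoid.Coprod.inr (M := B) (Multiplicative.ofAdd 1))
        = SemidirectProduct.inr (Multiplicative.ofAdd 1) := by
      simp [φem]
    rw [h1]
    show Monoid.Coprod.inr _ = _
    rfl

lemma φem_injective : Function.Injective (φem B) := by
  have h := πem_φem B
  intro x y hxy
  have := congrArg (πem B) hxy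
  rwa [show πem B (φem B x) = x from DFunLike.congr_fun h x,
      show πem B (φem B y) = y from DFunLike.congr_fun h y] at this

end Shift


lemma multZ_tf : ∀ z : Multiplicative ℤ, IsOfFinOrder z → z = 1 := by
  intro z h
  obtain ⟨k, hk, hp⟩ := isOfFinOrder_iff_pow_eq_one.mp h
  have h0 : Multiplicative.toAdd (z ^ k) = 0 := by rw [hp]; rfl
  rw [toAdd_pow, nsmul_eq_mul] at h0
  have hz : Multiplicative.toAdd z = 0 := by
    rcases mul_eq_zero.mp h0 with h | h
    · have : k = 0 := by exact_mod_cast h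
      omega
    · exact h
  have : z = Multiplicative.ofAdd 0 := by
    rw [← hz, ofAdd_toAdd]
  simpa using this

section TFtransfer

variable (B : Type*) [Group B]

lemma sdb_tf (htfB : ∀ b : B, IsOfFinOrder b → b = 1) :
    ∀ x : SDB B, IsOfFinOrder x → x = 1 := by
  intro x hx
  have hNZ : ∀ m : NZ B, IsOfFinOrder m → m = 1 :=
    coprodI_torsionFree (fun _ m h => htfB m h)
  have hr : x.right = 1 := multZ_tf _ (finOrder_map SemidirectProduct.rightHom hx)
  have hxl : x = SemidirectProduct.inl x.left := by
    cases x with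
    | mk l r =>
      simp only at hr
      rw [hr]
      rfl
  rw [hxl] at hx ⊢
  rw [hNZ x.left (finOrder_of_injective SemidirectProduct.inl
    SemidirectProduct.inl_injective hx), map_one]

lemma coprod_int_tf (htfB : ∀ b : B, IsOfFinOrder b → b = 1) :
    ∀ x : Monoid.Coprod B (Multiplicative ℤ), IsOfFinOrder x → x = 1 := by
  intro x hx
  apply φem_injective B
  rw [map_one]
  exact sdb_tf B htfB (φem B x) (finOrder_map _ hx)

end TFtransfer

section Theta

variable (A K : Type*) [Group A] [Group K]

local notation "BAK" => Monoid.Coprod A K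

def Θm : BAK →* Monoid.Coprod BAK (Multiplicative ℤ) :=
  Monoid.Coprod.lift (Monoid.Coprod.inl.comp Monoid.Coprod.inl)
    ((MulAut.conj (Monoid.Coprod.inr (Multiplicative.ofAdd (1:ℤ)))).toMonoidHom.comp
      (Monoid.Coprod.inl.comp Monoid.Coprod.inr))

def μm : BAK →* NZ BAK :=
  Monoid.Coprod.lift
    ((Monoid.CoprodI.of (M := fun _ : ℤ => BAK) (i := 0)).comp Monoid.Coprod.inl)
    ((Monoid.CoprodI.of (M := fun _ : ℤ => BAK) (i := 1)).comp Monoid.Coprod.inr)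

noncomputable def ρd (d : ℤ) : BAK →* BAK :=
  open scoped Classical in
  Monoid.Coprod.lift (if d = 0 then Monoid.Coprod.inl else 1)
    (if d = 1 then Monoid.Coprod.inr else 1)

noncomputable def ρm : NZ BAK →* BAK :=
  Monoid.CoprodI.lift (fun i => ρd A K i)

lemma conj_mul_conj {G : Type*} [Group G] (p q x : G) :
    (p * q) * x * (p * q)⁻¹ = p * (q * x * q⁻¹) * p⁻¹ := by group

lemma φem_Θ : (φem BAK).comp (Θm A K) = SemidirectProduct.inl.comp (μm A K) := by
  apply Monoid.Coprod.hom_ext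
  · refine MonoidHom.ext fun a => ?_
    simp [Θm, μm, φem]
  · refine MonoidHom.ext fun k => ?_
    show φem BAK (Θm A K (Monoid.Coprod.inr k)) = SemidirectProduct.inl (μm A K (Monoid.Coprod.inr k))
    have h1 : Θm A K (Monoid.Coprod.inr k)
        = Monoid.Coprod.inr (Multiplicative.ofAdd (1:ℤ)) *
          Monoid.Coprod.inl (Monoid.Coprod.inr k) *
          (Monoid.Coprod.inr (Multiplicative.ofAdd (1:ℤ)))⁻¹ := by
      simp [Θm]
    have h2 : μm A K (Monoid.Coprod.inr k)
        = Monoid.CoprodI.of (M := fun _ : ℤ => BAK) (i := 1) (Monoid.Coprod.inr k) := by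
      simp [μm]
    rw [h1, h2, map_mul, map_mul, map_inv]
    have h3 : φem BAK (Monoid.Coprod.inr (Multiplicative.ofAdd (1:ℤ)))
        = SemidirectProduct.inr (Multiplicative.ofAdd (1:ℤ)) := by simp [φem]
    have h4 : φem BAK (Monoid.Coprod.inl (Monoid.Coprod.inr k))
        = SemidirectProduct.inl (Monoid.CoprodI.of (M := fun _ : ℤ => BAK) (i := 0)
            (Monoid.Coprod.inr k)) := by simp [φem]
    rw [h3, h4,
      show (SemidirectProduct.inr (Multiplicative.ofAdd (1:ℤ)) : SDB BAK)⁻¹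
        = SemidirectProduct.inr (Multiplicative.ofAdd (1:ℤ))⁻¹ from (map_inv _ _).symm,
      ← SemidirectProduct.inl_aut]
    have hΦ : Φz BAK (Multiplicative.ofAdd (1:ℤ))
        (Monoid.CoprodI.of (M := fun _ : ℤ => BAK) (i := 0) (Monoid.Coprod.inr k))
        = Monoid.CoprodI.of (M := fun _ : ℤ => BAK) (i := 1) (Monoid.Coprod.inr k) := by
      rw [Φz_apply, σh_of]
    rw [hΦ]

lemma ρ_μ : (ρm A K).comp (μm A K) = MonoidHom.id BAK := by
  apply Monoid.Coprod.hom_ext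
  · ext a
    simp [ρm, μm, ρd]
  · ext k
    simp [ρm, μm, ρd]

theorem theta_nontrivial (wB : BAK)
    (hA : ¬ ∃ v : A, IsConj (Monoid.Coprod.inl v) wB)
    (hK : ¬ ∃ v : K, IsConj (Monoid.Coprod.inr v) wB) :
    ¬ ∃ v : BAK, IsConj (Monoid.Coprod.inl v) (Θm A K wB) := by
  rintro ⟨v, hconj⟩
  obtain ⟨c, hc⟩ := isConj_iff.mp hconj
  have e1 : φem BAK (Monoid.Coprod.inl v)
      = SemidirectProduct.inl (Monoid.CoprodI.of (M := fun _ : ℤ => BAK) (i := 0) v) := by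
    simp [φem]
  have e2 : φem BAK (Θm A K wB) = SemidirectProduct.inl (μm A K wB) :=
    DFunLike.congr_fun (φem_Θ A K) wB
  have h1 : φem BAK c * SemidirectProduct.inl (Monoid.CoprodI.of (M := fun _ : ℤ => BAK) (i := 0) v)
      * (φem BAK c)⁻¹ = SemidirectProduct.inl (μm A K wB) := by
    rw [← e1, ← e2, ← hc]
    simp [map_mul]
  set m := (φem BAK c).left with hm
  set d := (φem BAK c).right with hd
  have hdecomp : φem BAK c = SemidirectProduct.inl m * SemidirectProduct.inr d :=
    (SemidirectProduct.inl_left_mul_inr_right _).symm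
  rw [hdecomp, conj_mul_conj,
    show (SemidirectProduct.inr d : SDB BAK)⁻¹ = SemidirectProduct.inr d⁻¹ from
      (map_inv _ _).symm,
    ← SemidirectProduct.inl_aut, ← map_mul,
    show (SemidirectProduct.inl m : SDB BAK)⁻¹ = SemidirectProduct.inl m⁻¹ from
      (map_inv _ _).symm,
    ← map_mul] at h1
  have h3 : m * (Φz BAK d) (Monoid.CoprodI.of (M := fun _ : ℤ => BAK) (i := 0) v) * m⁻¹
      = μm A K wB := SemidirectProduct.inl_injective h1
  have h4 : ρm A K m * ρd A K (0 + Multiplicative.toAdd d) v * (ρm A K m)⁻¹ = wB := by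
    have h5 := congrArg (ρm A K) h3
    rw [map_mul, map_mul, map_inv] at h5
    rw [Φz_apply, σh_of] at h5
    have h6 : ρm A K (Monoid.CoprodI.of (M := fun _ : ℤ => BAK)
        (i := 0 + Multiplicative.toAdd d) v) = ρd A K (0 + Multiplicative.toAdd d) v :=
      Monoid.CoprodI.lift_of _ _
    have h7 : ρm A K (μm A K wB) = wB := DFunLike.congr_fun (ρ_μ A K) wB
    rw [h6, h7] at h5
    exact h5
  rw [zero_add] at h4
  rcases eq_or_ne (Multiplicative.toAdd d) 0 with hd0 | hd0
  · refine hA ⟨Monoid.Coprod.fst v, isConj_iff.mpr ⟨ρm A K m, ?_⟩⟩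
    rw [← h4, hd0]
    congr 2
    show Monoid.Coprod.inl (Monoid.Coprod.lift (MonoidHom.id A) (1 : K →* A) v) = ρd A K 0 v
    have : (Monoid.Coprod.inl : A →* BAK).comp (Monoid.Coprod.lift (MonoidHom.id A) 1)
        = ρd A K 0 := by
      apply Monoid.Coprod.hom_ext
      · ext a; simp [ρd]
      · ext k; simp [ρd]
    exact DFunLike.congr_fun this v
  rcases eq_or_ne (Multiplicative.toAdd d) 1 with hd1 | hd1
  · refine hK ⟨Monoid.Coprod.snd v, isConj_iff.mpr ⟨ρm A K m, ?_⟩⟩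
    rw [← h4, hd1]
    congr 2
    show Monoid.Coprod.inr (Monoid.Coprod.lift (1 : A →* K) (MonoidHom.id K) v) = ρd A K 1 v
    have : (Monoid.Coprod.inr : K →* BAK).comp (Monoid.Coprod.lift 1 (MonoidHom.id K))
        = ρd A K 1 := by
      apply Monoid.Coprod.hom_ext
      · ext a; simp [ρd]
      · ext k; simp [ρd]
    exact DFunLike.congr_fun this v
  · refine hA ⟨1, ?_⟩
    rw [map_one]
    have hzero : ρd A K (Multiplicative.toAdd d) v = 1 := by
      have : ρd A K (Multiplicative.toAdd d) = 1 := by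
        unfold ρd
        rw [if_neg hd0, if_neg hd1]
        apply Monoid.Coprod.hom_ext
        · ext a; simp
        · ext k; simp
      rw [this]; rfl
    have : wB = 1 := by rw [← h4, hzero]; group
    rw [this]
end Theta

section Chi

variable (H K : Type*) [Group H] [Group K]

def χf : Monoid.Coprod (Monoid.Coprod H K) (Multiplicative ℤ) →*
    Monoid.Coprod (Monoid.Coprod H (Multiplicative ℤ)) K :=
  Monoid.Coprod.lift (P := Monoid.Coprod (Monoid.Coprod H (Multiplicative ℤ)) K)
    (Monoid.Coprod.lift (Monoid.Coprod.inl.comp Monoid.Coprod.inl) Monoid.Coprod.inr)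
    (Monoid.Coprod.inl.comp Monoid.Coprod.inr)

def χg : Monoid.Coprod (Monoid.Coprod H (Multiplicative ℤ)) K →*
    Monoid.Coprod (Monoid.Coprod H K) (Multiplicative ℤ) :=
  Monoid.Coprod.lift
    (Monoid.Coprod.lift (Monoid.Coprod.inl.comp Monoid.Coprod.inl) Monoid.Coprod.inr)
    (Monoid.Coprod.inl.comp Monoid.Coprod.inr)

lemma χgf : (χg H K).comp (χf H K) = MonoidHom.id _ := by
  apply Monoid.Coprod.hom_ext
  · apply Monoid.Coprod.hom_ext
    · refine MonoidHom.ext fun h => ?_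
      simp [χf, χg]
    · refine MonoidHom.ext fun z => ?_
      simp [χf, χg]
  · refine MonoidHom.ext fun z => ?_
    simp [χf, χg]

lemma χfg : (χf H K).comp (χg H K) = MonoidHom.id _ := by
  apply Monoid.Coprod.hom_ext
  · apply Monoid.Coprod.hom_ext
    · refine MonoidHom.ext fun h => ?_
      simp [χf, χg]
    · refine MonoidHom.ext fun z => ?_
      simp [χf, χg]
  · refine MonoidHom.ext fun z => ?_
    simp [χf, χg]

lemma χg_inl : (χg H K).comp Monoid.Coprod.inl
    = Monoid.Coprod.map (Monoid.Coprod.inl : H →* Monoid.Coprod H K)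
        (MonoidHom.id (Multiplicative ℤ)) := by
  apply Monoid.Coprod.hom_ext
  · refine MonoidHom.ext fun h => ?_
    simp [χg]
  · refine MonoidHom.ext fun z => ?_
    simp [χg]

end Chi

lemma coprod_isConj_elim {M N' : Type*} [Group M] [Group N'] {a b : Monoid.Coprod M N'}
    (h : IsConj a b) : ∃ c : Monoid.Coprod M N', c * a * c⁻¹ = b := isConj_iff.mp h

lemma coprod_isConj_intro {M N' : Type*} [Group M] [Group N'] {a b : Monoid.Coprod M N'}
    (c : Monoid.Coprod M N') (h : c * a * c⁻¹ = b) : IsConj a b := isConj_iff.mpr ⟨c, h⟩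

lemma coprod_isConj_map {M N' P₁ P₂ : Type*} [Group M] [Group N'] [Group P₁] [Group P₂]
    (f : Monoid.Coprod M N' →* Monoid.Coprod P₁ P₂) {a b : Monoid.Coprod M N'}
    (h : IsConj a b) : IsConj (f a) (f b) := by
  obtain ⟨c, hc⟩ := isConj_iff.mp h
  exact isConj_iff.mpr ⟨f c, by rw [← hc, map_mul, map_mul, map_inv]⟩

lemma coprod_isConj_one {M N' : Type*} [Group M] [Group N'] {a : Monoid.Coprod M N'}
    (h : IsConj (1 : Monoid.Coprod M N') a) : a = 1 := isConj_one_right.mp h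

end LSMaux

universe u

/-- An equation `w ∈ G * ⟨t⟩∞` is nontrivial if `w` is not conjugate in
`G * ⟨t⟩∞` to an element of `G`. -/
def EqNontrivial (G : Type u) [Group G]
    (w : Monoid.Coprod G (Multiplicative ℤ)) : Prop :=
  ¬ ∃ g : G, IsConj (Monoid.Coprod.inl g) w

/-- An equation `w ∈ G * ⟨t⟩∞` is solvable over `G` if some overgroup of `G`
contains a solution. -/
def EqSolvable (G : Type u) [Group G]
    (w : Monoid.Coprod G (Multiplicative ℤ)) : Prop :=
  ∃ (G' : Type u) (_ : Group G') (i : G →* G') (t' : G'),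
    Function.Injective i ∧ Monoid.Coprod.lift i (zpowersHom G' t') w = 1

/-- An equation `w` over `G` is magnusian if it is solvable over `G` and, for every
free product decomposition `G ≃ H * K` such that `w` is not conjugate in
`G * ⟨t⟩∞` to an element of `H * ⟨t⟩∞`, some overgroup of `G` contains a solution
`t'` transcendental over `H`, i.e. such that the natural map
`H * ⟨t'⟩∞ → G'` is injective (so that `⟨H, t'⟩ = H * ⟨t'⟩∞`). -/
def EqMagnusian (G : Type u) [Group G]
    (w : Monoid.Coprod G (Multiplicative ℤ)) : Prop :=
  EqSolvable G w ∧
  ∀ (H K : Type u) (_ : Group H) (_ : Group K) (e : G ≃* Monoid.Coprod H K),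
    (¬ ∃ v : Monoid.Coprod H (Multiplicative ℤ),
        IsConj
          (Monoid.Coprod.map (Monoid.Coprod.inl : H →* Monoid.Coprod H K)
            (MonoidHom.id (Multiplicative ℤ)) v)
          (Monoid.Coprod.map e.toMonoidHom (MonoidHom.id (Multiplicative ℤ)) w)) →
    ∃ (G' : Type u) (_ : Group G') (i : G →* G') (t' : G'),
      Function.Injective i ∧
      Monoid.Coprod.lift i (zpowersHom G' t') w = 1 ∧
      Function.Injective
        (Monoid.Coprod.lift
          (i.comp (e.symm.toMonoidHom.comp (Monoid.Coprod.inl : H →* Monoid.Coprod H K)))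
          (zpowersHom G' t'))

open LSMaux in
set_option maxHeartbeats 1000000 in
/-- If the Levin conjecture holds (every nontrivial equation over every torsion-free
group is solvable over it), then every solvable nontrivial equation over a
torsion-free group is magnusian. -/
theorem levin_implies_solvable_is_magnusian
    (levin : ∀ (G : Type u) [Group G], (∀ g : G, IsOfFinOrder g → g = 1) →
      ∀ w : Monoid.Coprod G (Multiplicative ℤ), EqNontrivial G w → EqSolvable G w) :
    ∀ (G : Type u) [Group G], (∀ g : G, IsOfFinOrder g → g = 1) →
      ∀ w : Monoid.Coprod G (Multiplicative ℤ),
        EqNontrivial G w → EqSolvable G w → EqMagnusian G w := by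
  intro G instG hGtf w _hnt hsolv
  classical
  refine ⟨hsolv, ?_⟩
  intro H K instH instK e hyp
  letI := instH
  letI := instK
  set N := Subgroup.normalClosure ({w} : Set (Monoid.Coprod G (Multiplicative ℤ))) with hNdef
  let Q := Monoid.Coprod G (Multiplicative ℤ) ⧸ N
  let mk : Monoid.Coprod G (Multiplicative ℤ) →* Q := QuotientGroup.mk' N
  let i : G →* Q := mk.comp Monoid.Coprod.inl
  let t' : Q := mk (Monoid.Coprod.inr (Multiplicative.ofAdd 1))
  have hlift : Monoid.Coprod.lift i (zpowersHom Q t') = mk := by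
    apply Monoid.Coprod.hom_ext
    · rfl
    · apply MonoidHom.ext_mint
      show zpowersHom Q t' (Multiplicative.ofAdd 1)
        = mk (Monoid.Coprod.inr (Multiplicative.ofAdd 1))
      rw [zpowersHom_apply, toAdd_ofAdd, zpow_one]
  have hmem : ∀ x : Monoid.Coprod G (Multiplicative ℤ), mk x = 1 → x ∈ N := by
    intro x hx
    exact (QuotientGroup.eq_one_iff x).mp hx
  have hwQ : mk w = 1 :=
    (QuotientGroup.eq_one_iff w).mpr (Subgroup.subset_normalClosure rfl)
  have hker : ∀ {P : Type u} [Group P] (F : Monoid.Coprod G (Multiplicative ℤ) →* P),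
      F w = 1 → ∀ x ∈ N, F x = 1 := by
    intro P _ F hF x hx
    have hle : N ≤ F.ker :=
      Subgroup.normalClosure_le_normal (by simpa [Set.singleton_subset_iff] using hF)
    exact hle hx
  have hi_inj : Function.Injective i := by
    obtain ⟨G₁, inst₁, j, t₁, hj, hsolw⟩ := hsolv
    rw [injective_iff_map_eq_one]
    intro g hg
    have hx : Monoid.Coprod.inl g ∈ N := hmem _ hg
    have h1 : Monoid.Coprod.lift j (zpowersHom G₁ t₁) (Monoid.Coprod.inl g) = 1 :=
      hker _ hsolw _ hx
    rw [Monoid.Coprod.lift_apply_inl] at h1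
    exact (injective_iff_map_eq_one j).mp hj g h1
  refine ⟨Q, inferInstance, i, t', hi_inj, by rw [hlift]; exact hwQ, ?_⟩
  -- the rearranged word
  set eef := Monoid.Coprod.map e.toMonoidHom (MonoidHom.id (Multiplicative ℤ)) with heef
  set eeg := Monoid.Coprod.map e.symm.toMonoidHom (MonoidHom.id (Multiplicative ℤ)) with heeg
  have hgf : ∀ x, eeg (eef x) = x := by
    have h1 : e.symm.toMonoidHom.comp e.toMonoidHom = MonoidHom.id G :=
      MonoidHom.ext fun g => e.symm_apply_apply g
    have : eeg.comp eef = MonoidHom.id _ := by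
      rw [heef, heeg, Monoid.Coprod.map_comp_map, h1]
      exact Monoid.Coprod.map_id_id
    exact fun x => DFunLike.congr_fun this x
  have hfg : ∀ x, eef (eeg x) = x := by
    have h1 : e.toMonoidHom.comp e.symm.toMonoidHom = MonoidHom.id (Monoid.Coprod H K) :=
      MonoidHom.ext fun g => e.apply_symm_apply g
    have : eef.comp eeg = MonoidHom.id _ := by
      rw [heef, heeg, Monoid.Coprod.map_comp_map, h1]
      exact Monoid.Coprod.map_id_id
    exact fun x => DFunLike.congr_fun this x
  have hχ1 : ∀ x, χg H K (χf H K x) = x := fun x => DFunLike.congr_fun (χgf H K) x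
  have hχ2 : ∀ x, χf H K (χg H K x) = x := fun x => DFunLike.congr_fun (χfg H K) x
  set wB := χf H K (eef w) with hwB
  have hT : Monoid.Coprod.lift (i.comp (e.symm.toMonoidHom.comp Monoid.Coprod.inl))
        (zpowersHom Q t')
      = (mk.comp (eeg.comp (χg H K))).comp Monoid.Coprod.inl := by
    apply Monoid.Coprod.hom_ext
    · refine MonoidHom.ext fun h => ?_
      show i (e.symm (Monoid.Coprod.inl h)) = mk (eeg (χg H K (Monoid.Coprod.inl (Monoid.Coprod.inl h))))
      have h1 : χg H K (Monoid.Coprod.inl (Monoid.Coprod.inl h))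
          = Monoid.Coprod.inl (Monoid.Coprod.inl h) := by
        simp [χg]
      rw [h1, heeg]
      rfl
    · apply MonoidHom.ext_mint
      show zpowersHom Q t' (Multiplicative.ofAdd 1)
        = mk (eeg (χg H K (Monoid.Coprod.inl (Monoid.Coprod.inr (Multiplicative.ofAdd 1)))))
      have h1 : χg H K (Monoid.Coprod.inl (Monoid.Coprod.inr (Multiplicative.ofAdd 1)))
          = Monoid.Coprod.inr (Multiplicative.ofAdd 1) := by
        simp [χg]
      rw [h1, heeg, zpowersHom_apply, toAdd_ofAdd, zpow_one]
      rfl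
  rw [hT]
  rw [injective_iff_map_eq_one]
  intro a ha
  have hxN : eeg (χg H K (Monoid.Coprod.inl a)) ∈ N := hmem _ ha
  by_cases hKc : ∃ vK : K, IsConj (Monoid.Coprod.inr vK) wB
  · -- wB is conjugate into K : use the retraction onto Coprod H ℤ
    obtain ⟨vK, hvK⟩ := hKc
    set r : Monoid.Coprod (Monoid.Coprod H (Multiplicative ℤ)) K →*
        Monoid.Coprod H (Multiplicative ℤ) :=
      Monoid.Coprod.lift (MonoidHom.id _) 1 with hr
    have hrwB : r wB = 1 := by
      have h4 := coprod_isConj_map r hvK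
      have h5 : r (Monoid.Coprod.inr vK) = 1 := by simp [hr]
      rw [h5] at h4
      exact coprod_isConj_one h4
    have hFw : (r.comp ((χf H K).comp eef)) w = 1 := by
      show r (χf H K (eef w)) = 1
      rw [← hwB]
      exact hrwB
    have hFx := hker _ hFw _ hxN
    have : r (χf H K (eef (eeg (χg H K (Monoid.Coprod.inl a))))) = a := by
      rw [hfg, hχ2]
      simp [hr]
    rw [show (r.comp ((χf H K).comp eef)) (eeg (χg H K (Monoid.Coprod.inl a)))
        = r (χf H K (eef (eeg (χg H K (Monoid.Coprod.inl a))))) from rfl, this] at hFx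
    exact hFx
  · -- main case : apply the Levin conjecture to the twisted equation
    have hA : ¬ ∃ v : Monoid.Coprod H (Multiplicative ℤ),
        IsConj (Monoid.Coprod.inl v) wB := by
      rintro ⟨v, hv⟩
      apply hyp
      have h1 : χg H K (Monoid.Coprod.inl v)
          = Monoid.Coprod.map (Monoid.Coprod.inl : H →* Monoid.Coprod H K)
              (MonoidHom.id (Multiplicative ℤ)) v :=
        DFunLike.congr_fun (χg_inl H K) v
      have h2 := coprod_isConj_map (χg H K) hv
      have h3 : χg H K wB = eef w := by
        rw [hwB]
        exact hχ1 (eef w)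
      rw [h1, h3] at h2
      exact ⟨v, h2⟩
    have hnt2 := theta_nontrivial (Monoid.Coprod H (Multiplicative ℤ)) K wB hA hKc
    have htfB : ∀ b : Monoid.Coprod (Monoid.Coprod H (Multiplicative ℤ)) K,
        IsOfFinOrder b → b = 1 := by
      intro b hb
      have hfo : IsOfFinOrder (eeg (χg H K b)) := by
        obtain ⟨k, hk, hpow⟩ := isOfFinOrder_iff_pow_eq_one.mp hb
        refine isOfFinOrder_iff_pow_eq_one.mpr ⟨k, hk, ?_⟩
        rw [← map_pow, ← map_pow, hpow, map_one, map_one]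
      have h1 : eeg (χg H K b) = 1 := coprod_int_tf G hGtf _ hfo
      have h2 := congrArg (fun y => χf H K (eef y)) h1
      simpa [hfg, hχ2] using h2
    obtain ⟨Q₂, inst₂, j, s₁, hjinj, hsol2⟩ :=
      levin _ htfB _ hnt2
    set ψ : Monoid.Coprod (Monoid.Coprod H (Multiplicative ℤ)) K →* Q₂ :=
      Monoid.Coprod.lift (j.comp Monoid.Coprod.inl)
        ((MulAut.conj s₁).toMonoidHom.comp (j.comp Monoid.Coprod.inr)) with hψ
    have hψΘ : ψ = (Monoid.Coprod.lift j (zpowersHom Q₂ s₁)).comp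
        (Θm (Monoid.Coprod H (Multiplicative ℤ)) K) := by
      apply Monoid.Coprod.hom_ext
      · refine MonoidHom.ext fun x => ?_
        simp [hψ, Θm]
      · refine MonoidHom.ext fun k => ?_
        simp [hψ, Θm, MulAut.conj_apply, map_mul, map_inv,
          zpowersHom_apply, toAdd_ofAdd, zpow_one]
    have hψwB : ψ wB = 1 := by
      rw [hψΘ]
      exact hsol2
    have hFw : (ψ.comp ((χf H K).comp eef)) w = 1 := by
      show ψ (χf H K (eef w)) = 1
      rw [← hwB]
      exact hψwB
    have hFx := hker _ hFw _ hxN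
    have h2 : ψ (χf H K (eef (eeg (χg H K (Monoid.Coprod.inl a))))) = j (Monoid.Coprod.inl a) := by
      rw [hfg, hχ2]
      simp [hψ]
    rw [show (ψ.comp ((χf H K).comp eef)) (eeg (χg H K (Monoid.Coprod.inl a)))
        = ψ (χf H K (eef (eeg (χg H K (Monoid.Coprod.inl a))))) from rfl, h2] at hFx
    have h3 : (Monoid.Coprod.inl a : Monoid.Coprod (Monoid.Coprod H (Multiplicative ℤ)) K) = 1 :=
      (injective_iff_map_eq_one j).mp hjinj _ hFx
    have h4 : (Monoid.Coprod.inl a : Monoid.Coprod (Monoid.Coprod H (Multiplicative ℤ)) K)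
        = Monoid.Coprod.inl (1 : Monoid.Coprod H (Multiplicative ℤ)) := by
      rw [h3, map_one]
    exact Monoid.Coprod.inl_injective h4
end
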